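/- arXiv:2407.16381 — 4 statements merged into one kernel-verified Lean document; each statement's English description precedes it below -/
import Mathlib

section
/- Let Σ be a generable set of d-dimensional nonsingular cones in ℤ^d and let ε₁ ≠ ε₂ ∈ E(Σ) satisfy Σ(ε₁) ∩ Σ(ε₂) ≠ ∅. Then the standard blow-up Σ̃ of Σ along ε₁, ε₂ is again a generable set of d-dimensional nonsingular cones in ℤ^d. -/
/-!
In the coordinates of a nonsingular cone `σ` containing `ε₁, ε₂`, the blown-up cone `σ(ε₁)` is
the half `x_{ε₂} ≤ x_{ε₁}` of `σ` and `σ(ε₂)` the other half; they meet in `x_{ε₁} = x_{ε₂}`,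
the face spanned by `ε₁ + ε₂` and the remaining edges. Unimodularity of `σ(ε₁)` is the basis
change `ε₂ ↦ ε₁ + ε₂`.

For nonsingular cones, generability amounts to `σ ∩ σ'` spanning `coneOf σ ∩ coneOf σ'`: two
faces spanning the same cone have the same edges, since an edge spans an extremal ray and its
generator is primitive. On `coneOf (σ ∩ σ')` the coordinates of `σ` and of `σ'` agree, so the
intersections of the new cones with each other and with the old ones are read off from the
half-space descriptions above.
-/

open Finset

/-- The cone in `ℝ^d` generated (over the nonnegative reals) by a finite set of
integer vectors. -/
def coneOf {d : ℕ} (S : Finset (Fin d → ℤ)) : Set (Fin d → ℝ) :=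
  {x | ∃ c : (Fin d → ℤ) → ℝ, (∀ v, 0 ≤ c v) ∧ x = ∑ v ∈ S, c v • (fun l => (v l : ℝ))}

/-- `S` is the set of primitive edge generators of a `d`-dimensional nonsingular cone in
`ℤ^d`, i.e. `S` consists of `d` vectors forming a `ℤ`-basis of `ℤ^d`.  We identify such a
cone with its finite set of edge generators, an edge with its unique primitive generator. -/
def IsNsCone (d : ℕ) (S : Finset (Fin d → ℤ)) : Prop :=
  S.card = d ∧ Submodule.span ℤ (S : Set (Fin d → ℤ)) = ⊤

/-- The set of edges `E(Σ)` of a finite set of cones, each cone being given by its finite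
set of edge generators. -/
def edges {d : ℕ} (F : Finset (Finset (Fin d → ℤ))) : Finset (Fin d → ℤ) :=
  F.biUnion id

/-- A finite set of (`d`-dimensional nonsingular) cones is generable if the collection of
all the faces of all its cones is a fan: the intersection of any two such faces is again a
face of both.  A face of a cone corresponds to a subset of its set of edge generators. -/
def IsGenerable {d : ℕ} (F : Finset (Finset (Fin d → ℤ))) : Prop :=
  ∀ σ ∈ F, ∀ σ' ∈ F, ∀ s ⊆ σ, ∀ s' ⊆ σ',
    (∃ t ⊆ σ, coneOf s ∩ coneOf s' = coneOf t) ∧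
    (∃ t' ⊆ σ', coneOf s ∩ coneOf s' = coneOf t')

/-- The standard blow-up of `F` along the edges `ε₁, ε₂`: every cone `σ` containing both
`ε₁` and `ε₂` is replaced by the two cones `σ(ε₁)` and `σ(ε₂)` (where `σ(εᵢ)` is generated
by `ε₁ + ε₂` together with the edges of `σ` other than `ε_j`, `{i,j} = {1,2}`), and all
other cones are kept. -/
def blowUp {d : ℕ} (F : Finset (Finset (Fin d → ℤ))) (ε₁ ε₂ : Fin d → ℤ) :
    Finset (Finset (Fin d → ℤ)) :=
  F.filter (fun σ => ¬(ε₁ ∈ σ ∧ ε₂ ∈ σ)) ∪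
    (F.filter (fun σ => ε₁ ∈ σ ∧ ε₂ ∈ σ)).biUnion
      (fun σ => {insert (ε₁ + ε₂) (σ.erase ε₂), insert (ε₁ + ε₂) (σ.erase ε₁)})

variable {d : ℕ}

noncomputable def castVec (d : ℕ) : (Fin d → ℤ) →ₗ[ℤ] (Fin d → ℝ) :=
  (Int.castAddHom ℝ).toIntLinearMap.compLeft (Fin d)

@[simp] lemma castVec_apply (v : Fin d → ℤ) (l : Fin d) : castVec d v l = v l := rfl

lemma castVec_injective : Function.Injective (castVec d) := fun u v h =>
  funext fun l => Int.cast_injective (congrFun h l : (u l : ℝ) = v l)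

lemma mem_coneOf_iff {S : Finset (Fin d → ℤ)} {x : Fin d → ℝ} :
    x ∈ coneOf S ↔ ∃ c : (Fin d → ℤ) → ℝ, (∀ v, 0 ≤ c v) ∧ x = ∑ v ∈ S, c v • castVec d v :=
  Iff.rfl

section Cone

variable {S T : Finset (Fin d → ℤ)} {x y : Fin d → ℝ}

lemma sum_mem_coneOf {c : (Fin d → ℤ) → ℝ} (hST : S ⊆ T) (hc : ∀ v ∈ S, 0 ≤ c v) :
    ∑ v ∈ S, c v • castVec d v ∈ coneOf T := by
  refine mem_coneOf_iff.2 ⟨fun v => if v ∈ S then c v else 0, fun v => ?_, ?_⟩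
  · dsimp only
    split_ifs with h
    exacts [hc v h, le_rfl]
  · simp only [ite_smul, zero_smul]
    rw [Finset.sum_ite_mem, Finset.inter_eq_right.2 hST]

lemma mem_coneOf_self {v : Fin d → ℤ} (hv : v ∈ S) : castVec d v ∈ coneOf S := by
  simpa using sum_mem_coneOf (c := fun _ => 1) (Finset.singleton_subset_iff.2 hv)
    fun _ _ => zero_le_one

lemma coneOf_mono (h : S ⊆ T) : coneOf S ⊆ coneOf T := by
  intro x hx
  obtain ⟨c, hc, rfl⟩ := mem_coneOf_iff.1 hx
  exact sum_mem_coneOf h fun v _ => hc v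

lemma coneOf_inter_subset : coneOf (S ∩ T) ⊆ coneOf S ∩ coneOf T :=
  Set.subset_inter (coneOf_mono Finset.inter_subset_left) (coneOf_mono Finset.inter_subset_right)

lemma add_mem_coneOf (hx : x ∈ coneOf S) (hy : y ∈ coneOf S) : x + y ∈ coneOf S := by
  obtain ⟨c, hc, rfl⟩ := mem_coneOf_iff.1 hx
  obtain ⟨c', hc', rfl⟩ := mem_coneOf_iff.1 hy
  exact mem_coneOf_iff.2 ⟨c + c', fun v => add_nonneg (hc v) (hc' v),
    by simp [add_smul, Finset.sum_add_distrib]⟩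

lemma smul_mem_coneOf {r : ℝ} (hr : 0 ≤ r) (hx : x ∈ coneOf S) : r • x ∈ coneOf S := by
  obtain ⟨c, hc, rfl⟩ := mem_coneOf_iff.1 hx
  exact mem_coneOf_iff.2 ⟨r • c, fun v => mul_nonneg hr (hc v),
    by simp [Finset.smul_sum, smul_smul]⟩

lemma coneOf_subset_coneOf (h : ∀ v ∈ S, castVec d v ∈ coneOf T) : coneOf S ⊆ coneOf T := by
  intro x hx
  obtain ⟨c, hc, rfl⟩ := mem_coneOf_iff.1 hx
  exact Finset.sum_induction _ (· ∈ coneOf T) (fun _ _ => add_mem_coneOf)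
    (by simpa using sum_mem_coneOf (c := 0) (Finset.empty_subset T) (by simp))
    fun v hv => smul_mem_coneOf (hc v) (h v hv)

end Cone

namespace IsNsCone

variable {B s t : Finset (Fin d → ℤ)} (hB : IsNsCone d B)
include hB

lemma span_castVec : Submodule.span ℝ (castVec d '' B) = ⊤ := by
  have hcast : ∀ z, castVec d z ∈ Submodule.span ℝ (castVec d '' B) := fun z =>
    Submodule.span_le_restrictScalars ℤ ℝ _ <| by
      rw [Submodule.span_image, hB.2]
      exact Submodule.mem_map_of_mem Submodule.mem_top
  rw [eq_top_iff, ← (Pi.basisFun ℝ (Fin d)).span_eq, Submodule.span_le]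
  rintro _ ⟨i, rfl⟩
  have : Pi.basisFun ℝ (Fin d) i = castVec d (Pi.single i 1) := by
    ext l
    by_cases h : l = i <;> simp [h]
  exact this ▸ hcast _

lemma linearIndependent : LinearIndependent ℝ (fun v : B => castVec d v) := by
  refine linearIndependent_of_top_le_span_of_card_eq_finrank ?_ (by simp [hB.1])
  rw [Set.range_comp', Subtype.range_coe, hB.span_castVec]

noncomputable def basis : Module.Basis B ℝ (Fin d → ℝ) :=
  basisOfLinearIndependentOfCardEqFinrank' _ hB.linearIndependent (by simp [hB.1])

open Classical in
/-- The coordinate along the generator `v`, extended by `0` to vectors `v ∉ B`. -/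
noncomputable def coord (v : Fin d → ℤ) : (Fin d → ℝ) →ₗ[ℝ] ℝ :=
  if h : v ∈ B then hB.basis.coord ⟨v, h⟩ else 0

lemma coord_castVec {u : Fin d → ℤ} (hu : u ∈ B) (v : Fin d → ℤ) :
    hB.coord v (castVec d u) = if u = v then 1 else 0 := by
  have hbasis : castVec d u = hB.basis ⟨u, hu⟩ := by simp [basis]
  by_cases hv : v ∈ B
  · simp [coord, hv, hbasis, Finsupp.single_apply, Subtype.ext_iff]
  · simp only [coord, hv, dite_false, LinearMap.zero_apply]
    exact (if_neg fun huv : u = v => hv (huv ▸ hu)).symm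

lemma coord_sum (hs : s ⊆ B) (c : (Fin d → ℤ) → ℝ) (v : Fin d → ℤ) :
    hB.coord v (∑ u ∈ s, c u • castVec d u) = if v ∈ s then c v else 0 := by
  rw [map_sum, Finset.sum_congr rfl fun u hu => by
    rw [map_smul, hB.coord_castVec (hs hu), smul_eq_mul, mul_ite, mul_one, mul_zero]]
  exact Finset.sum_ite_eq' s v c

lemma sum_coord_smul (x : Fin d → ℝ) : ∑ v ∈ B, hB.coord v x • castVec d v = x := by
  conv_rhs => rw [← hB.basis.sum_repr x]
  rw [← Finset.sum_coe_sort B]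
  refine Finset.sum_congr rfl fun v _ => ?_
  simp [coord, v.2, basis]

lemma sum_coord_smul_of_subset {x : Fin d → ℝ} (hs : s ⊆ B)
    (hx : ∀ v ∉ s, hB.coord v x = 0) : ∑ v ∈ s, hB.coord v x • castVec d v = x := by
  rw [Finset.sum_subset hs fun v _ hv => by rw [hx v hv, zero_smul], hB.sum_coord_smul]

lemma mem_coneOf_iff_coord (hs : s ⊆ B) {x : Fin d → ℝ} :
    x ∈ coneOf s ↔ (∀ v, 0 ≤ hB.coord v x) ∧ ∀ v ∉ s, hB.coord v x = 0 := by
  constructor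
  · intro hx
    obtain ⟨c, hc, rfl⟩ := mem_coneOf_iff.1 hx
    simp only [hB.coord_sum hs]
    exact ⟨fun v => by split_ifs; exacts [hc v, le_rfl], fun v hv => if_neg hv⟩
  · rintro ⟨hpos, hzero⟩
    rw [← hB.sum_coord_smul_of_subset hs hzero]
    exact sum_mem_coneOf subset_rfl fun v _ => hpos v

lemma exists_coord_castVec_eq_intCast (z v : Fin d → ℤ) :
    ∃ n : ℤ, hB.coord v (castVec d z) = n := by
  obtain ⟨f, -, hf⟩ :=
    Submodule.mem_span_finset.1 (hB.2 ▸ Submodule.mem_top : z ∈ Submodule.span ℤ (B : Set _))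
  refine ⟨if v ∈ B then f v else 0, ?_⟩
  simp only [← hf, map_sum, map_zsmul, ← Int.cast_smul_eq_zsmul ℝ, hB.coord_sum subset_rfl]
  split_ifs <;> simp

lemma coneOf_inter_coneOf (hs : s ⊆ B) (ht : t ⊆ B) :
    coneOf s ∩ coneOf t = coneOf (s ∩ t) := by
  refine subset_antisymm (fun x ⟨hxs, hxt⟩ => ?_) coneOf_inter_subset
  rw [hB.mem_coneOf_iff_coord hs] at hxs
  rw [hB.mem_coneOf_iff_coord ht] at hxt
  refine (hB.mem_coneOf_iff_coord (Finset.inter_subset_left.trans hs)).2 ⟨hxs.1, fun v hv => ?_⟩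
  rcases not_and_or.1 (Finset.mem_inter.not.1 hv) with h | h
  exacts [hxs.2 v h, hxt.2 v h]

lemma coord_eq_of_mem_coneOf {B' : Finset (Fin d → ℤ)} (hB' : IsNsCone d B') (hs : s ⊆ B)
    (hs' : s ⊆ B') {x : Fin d → ℝ} (hx : x ∈ coneOf s) (v : Fin d → ℤ) :
    hB.coord v x = hB'.coord v x := by
  obtain ⟨c, -, rfl⟩ := mem_coneOf_iff.1 hx
  rw [hB.coord_sum hs, hB'.coord_sum hs']

lemma exists_castVec_eq_smul_of_mem_coneOf {T : Finset (Fin d → ℤ)} {v : Fin d → ℤ}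
    (hv : v ∈ B) (hT : ∀ w ∈ T, castVec d w ∈ coneOf B) (hvT : castVec d v ∈ coneOf T) :
    ∃ w ∈ T, ∃ r : ℝ, 0 < r ∧ castVec d w = r • castVec d v := by
  obtain ⟨c, hc, hcv⟩ := mem_coneOf_iff.1 hvT
  have hcoord : ∀ u, ∑ w ∈ T, c w * hB.coord u (castVec d w) = if v = u then 1 else 0 :=
    fun u => by simp [← hB.coord_castVec hv u, hcv, map_sum]
  have hnonneg : ∀ w ∈ T, ∀ u, 0 ≤ c w * hB.coord u (castVec d w) := fun w hw u =>
    mul_nonneg (hc w) (((hB.mem_coneOf_iff_coord subset_rfl).1 (hT w hw)).1 u)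
  obtain ⟨w, hw, hpos⟩ : ∃ w ∈ T, 0 < c w * hB.coord v (castVec d w) := by
    by_contra! h
    have := Finset.sum_nonpos h
    rw [hcoord, if_pos rfl] at this
    exact one_pos.not_ge this
  have hzero : ∀ u ∉ ({v} : Finset _), hB.coord u (castVec d w) = 0 := fun u hu => by
    have := (Finset.sum_eq_zero_iff_of_nonneg fun w hw => hnonneg w hw u).1
      ((hcoord u).trans (if_neg (Ne.symm (Finset.mem_singleton.not.1 hu)))) w hw
    exact (mul_eq_zero.1 this).resolve_left (left_ne_zero_of_mul hpos.ne')
  refine ⟨w, hw, _, pos_of_mul_pos_right hpos (hc w), ?_⟩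
  simpa using (hB.sum_coord_smul_of_subset (Finset.singleton_subset_iff.2 hv) hzero).symm

lemma eq_of_castVec_eq_smul {B' : Finset (Fin d → ℤ)} (hB' : IsNsCone d B') {v w : Fin d → ℤ}
    (hv : v ∈ B) (hw : w ∈ B') {r : ℝ} (hr : 0 < r) (h : castVec d w = r • castVec d v) :
    w = v := by
  -- `r` and `r⁻¹` are coordinates of lattice vectors in lattice bases, hence integers.
  obtain ⟨n, hn⟩ := hB.exists_coord_castVec_eq_intCast w v
  obtain ⟨m, hm⟩ := hB'.exists_coord_castVec_eq_intCast v w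
  rw [h, map_smul, hB.coord_castVec hv, if_pos rfl, smul_eq_mul, mul_one] at hn
  rw [eq_inv_smul_iff₀ hr.ne' |>.2 h.symm, map_smul, hB'.coord_castVec hw, if_pos rfl,
    smul_eq_mul, mul_one] at hm
  have hnm : n * m = 1 := by exact_mod_cast hn ▸ hm ▸ mul_inv_cancel₀ hr.ne'
  have hn1 : n = 1 := Int.eq_one_of_mul_eq_one_right (by exact_mod_cast hn ▸ hr.le) hnm
  exact castVec_injective (by rw [h, hn, hn1, Int.cast_one, one_smul])

lemma subset_of_coneOf_eq {B' : Finset (Fin d → ℤ)} (hB' : IsNsCone d B') (ht : t ⊆ B)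
    (hs : s ⊆ B') (h : coneOf t = coneOf s) : t ⊆ s := by
  intro v hv
  -- `v` spans an extremal ray of `coneOf t`, so some generator of `s` lies on that ray.
  obtain ⟨w, hw, r, hr, hwv⟩ := hB.exists_castVec_eq_smul_of_mem_coneOf (ht hv)
    (fun w hw => coneOf_mono ht (h ▸ mem_coneOf_self hw)) (h ▸ mem_coneOf_self hv)
  exact hB.eq_of_castVec_eq_smul hB' (ht hv) (hs hw) hr hwv ▸ hw

end IsNsCone

lemma isGenerable_iff {G : Finset (Finset (Fin d → ℤ))} (hns : ∀ σ ∈ G, IsNsCone d σ) :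
    IsGenerable G ↔ ∀ σ ∈ G, ∀ σ' ∈ G, coneOf σ ∩ coneOf σ' = coneOf (σ ∩ σ') := by
  constructor
  · intro hgen σ hσ σ' hσ'
    obtain ⟨⟨t, ht, hcone⟩, ⟨t', ht', hcone'⟩⟩ := hgen σ hσ σ' hσ' σ subset_rfl σ' subset_rfl
    have htt' := (hns σ hσ).subset_of_coneOf_eq (hns σ' hσ') ht ht' (hcone.symm.trans hcone')
    refine subset_antisymm ?_ coneOf_inter_subset
    rw [hcone]
    exact coneOf_mono fun v hv => Finset.mem_inter.2 ⟨ht hv, ht' (htt' hv)⟩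
  · intro hinter σ hσ σ' hσ' s hs s' hs'
    have hface : coneOf s ∩ coneOf s' = coneOf (s ∩ s') := by
      refine subset_antisymm (fun x ⟨hxs, hxs'⟩ => ?_) coneOf_inter_subset
      have hx : x ∈ coneOf (σ ∩ σ') :=
        hinter σ hσ σ' hσ' ▸ ⟨coneOf_mono hs hxs, coneOf_mono hs' hxs'⟩
      have hx' : x ∈ coneOf (s ∩ (σ ∩ σ')) :=
        (hns σ hσ).coneOf_inter_coneOf hs Finset.inter_subset_left ▸ ⟨hxs, hx⟩
      have hx'' : x ∈ coneOf (s ∩ (σ ∩ σ') ∩ s') :=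
        (hns σ' hσ').coneOf_inter_coneOf
          (Finset.inter_subset_right.trans Finset.inter_subset_right) hs' ▸ ⟨hx', hxs'⟩
      exact coneOf_mono (Finset.inter_subset_inter_right Finset.inter_subset_left) hx''
    exact ⟨⟨s ∩ s', Finset.inter_subset_left.trans hs, hface⟩,
      ⟨s ∩ s', Finset.inter_subset_right.trans hs', hface⟩⟩

/-- The cone `σ(ε₁)` of the blow-up of `σ` along `ε₁, ε₂`. -/
def blowUpCone (σ : Finset (Fin d → ℤ)) (ε₁ ε₂ : Fin d → ℤ) : Finset (Fin d → ℤ) :=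
  insert (ε₁ + ε₂) (σ.erase ε₂)

lemma mem_blowUp_iff {F : Finset (Finset (Fin d → ℤ))} {ε₁ ε₂ : Fin d → ℤ}
    {ρ : Finset (Fin d → ℤ)} :
    ρ ∈ blowUp F ε₁ ε₂ ↔ (ρ ∈ F ∧ ¬(ε₁ ∈ ρ ∧ ε₂ ∈ ρ)) ∨
      ∃ σ ∈ F, ε₁ ∈ σ ∧ ε₂ ∈ σ ∧ (ρ = blowUpCone σ ε₁ ε₂ ∨ ρ = blowUpCone σ ε₂ ε₁) := by
  simp [blowUp, blowUpCone, add_comm ε₂ ε₁, and_assoc]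

lemma coneOf_blowUpCone_subset {σ : Finset (Fin d → ℤ)} {ε₁ ε₂ : Fin d → ℤ} (h1 : ε₁ ∈ σ)
    (h2 : ε₂ ∈ σ) : coneOf (blowUpCone σ ε₁ ε₂) ⊆ coneOf σ := by
  refine coneOf_subset_coneOf fun v hv => ?_
  rcases Finset.mem_insert.1 hv with rfl | hv
  · exact map_add (castVec d) ε₁ ε₂ ▸ add_mem_coneOf (mem_coneOf_self h1) (mem_coneOf_self h2)
  · exact mem_coneOf_self (Finset.mem_of_mem_erase hv)

namespace IsNsCone

variable {B s : Finset (Fin d → ℤ)} {ε₁ ε₂ : Fin d → ℤ} (hB : IsNsCone d B)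
include hB

lemma add_notMem (h1 : ε₁ ∈ B) (h2 : ε₂ ∈ B) (hne : ε₁ ≠ ε₂) : ε₁ + ε₂ ∉ B := by
  intro he
  have h₁ := hB.coord_castVec he ε₁
  have h₂ := hB.coord_castVec he ε₂
  rw [map_add, map_add, hB.coord_castVec h1, hB.coord_castVec h2] at h₁ h₂
  simp [hne, hne.symm] at h₁ h₂
  exact hne (h₂.trans h₁.symm)

lemma coord_le_of_mem_coneOf_blowUpCone (h1 : ε₁ ∈ B) (h2 : ε₂ ∈ B) (hne : ε₁ ≠ ε₂)
    {x : Fin d → ℝ} (hx : x ∈ coneOf (blowUpCone B ε₁ ε₂)) :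
    hB.coord ε₂ x ≤ hB.coord ε₁ x := by
  obtain ⟨c, hc, rfl⟩ := mem_coneOf_iff.1 hx
  rw [blowUpCone, Finset.sum_insert
    fun h => hB.add_notMem h1 h2 hne (Finset.mem_of_mem_erase h)]
  simp [hB.coord_sum (Finset.erase_subset ε₂ B), hB.coord_castVec h1, hB.coord_castVec h2,
    hne, hne.symm, h1, hc ε₁]

lemma coord_smul_add_sum_eq (hs : s ⊆ B) (h1 : ε₁ ∈ s) (h2 : ε₂ ∈ s) (hne : ε₁ ≠ ε₂)
    {x : Fin d → ℝ} (hx : x ∈ coneOf s) :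
    hB.coord ε₂ x • castVec d (ε₁ + ε₂) + (hB.coord ε₁ x - hB.coord ε₂ x) • castVec d ε₁ +
      ∑ v ∈ (s.erase ε₁).erase ε₂, hB.coord v x • castVec d v = x := by
  conv_rhs => rw [← hB.sum_coord_smul_of_subset hs ((hB.mem_coneOf_iff_coord hs).1 hx).2,
    ← Finset.add_sum_erase s _ h1,
    ← Finset.add_sum_erase _ _ (Finset.mem_erase.2 ⟨hne.symm, h2⟩)]
  rw [map_add]
  module

lemma mem_coneOf_blowUpCone (hs : s ⊆ B) (h1 : ε₁ ∈ s) (h2 : ε₂ ∈ s) (hne : ε₁ ≠ ε₂)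
    {x : Fin d → ℝ} (hx : x ∈ coneOf s) (hle : hB.coord ε₂ x ≤ hB.coord ε₁ x) :
    x ∈ coneOf (blowUpCone s ε₁ ε₂) := by
  have hpos := ((hB.mem_coneOf_iff_coord hs).1 hx).1
  rw [← hB.coord_smul_add_sum_eq hs h1 h2 hne hx]
  refine add_mem_coneOf (add_mem_coneOf ?_ ?_) (sum_mem_coneOf ?_ fun v _ => hpos v)
  · exact smul_mem_coneOf (hpos ε₂) (mem_coneOf_self (Finset.mem_insert_self _ _))
  · exact smul_mem_coneOf (sub_nonneg.2 hle)
      (mem_coneOf_self (Finset.mem_insert_of_mem (Finset.mem_erase.2 ⟨hne, h1⟩)))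
  · exact fun v hv => Finset.mem_insert_of_mem (Finset.erase_subset_erase _
      (Finset.erase_subset _ _) hv)

end IsNsCone

lemma isNsCone_blowUpCone {B : Finset (Fin d → ℤ)} {ε₁ ε₂ : Fin d → ℤ} (hB : IsNsCone d B)
    (h1 : ε₁ ∈ B) (h2 : ε₂ ∈ B) (hne : ε₁ ≠ ε₂) :
    IsNsCone d (blowUpCone B ε₁ ε₂) := by
  constructor
  · have hd : 0 < d := hB.1 ▸ Finset.card_pos.2 ⟨ε₁, h1⟩
    rw [blowUpCone, Finset.card_insert_of_notMem
      fun h => hB.add_notMem h1 h2 hne (Finset.mem_of_mem_erase h),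
      Finset.card_erase_of_mem h2, hB.1]
    omega
  · refine eq_top_iff.2 (hB.2 ▸ Submodule.span_le.2 fun v hv => ?_)
    have hmem : ∀ w, w = ε₁ + ε₂ ∨ w ∈ B ∧ w ≠ ε₂ →
        w ∈ Submodule.span ℤ (blowUpCone B ε₁ ε₂ : Set (Fin d → ℤ)) :=
      fun w hw => Submodule.subset_span (by simpa [blowUpCone] using hw)
    obtain rfl | hv2 := eq_or_ne v ε₂
    · simpa using Submodule.sub_mem _ (hmem _ (Or.inl rfl)) (hmem ε₁ (Or.inr ⟨h1, hne⟩))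
    · exact hmem v (Or.inr ⟨hv, hv2⟩)

section BlowUpIntersections

variable {τ σ σ' : Finset (Fin d → ℤ)} {ε₁ ε₂ : Fin d → ℤ}

lemma coneOf_inter_coneOf_blowUpCone_subset (hσ : IsNsCone d σ)
    (hτσ : coneOf τ ∩ coneOf σ ⊆ coneOf (τ ∩ σ)) (h1 : ε₁ ∈ σ) (h2 : ε₂ ∈ σ) (hne : ε₁ ≠ ε₂)
    (hτ12 : ¬(ε₁ ∈ τ ∧ ε₂ ∈ τ)) :
    coneOf τ ∩ coneOf (blowUpCone σ ε₁ ε₂) ⊆ coneOf (τ ∩ blowUpCone σ ε₁ ε₂) := by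
  rintro x ⟨hxτ, hxσ₁⟩
  have hle := hσ.coord_le_of_mem_coneOf_blowUpCone h1 h2 hne hxσ₁
  obtain ⟨hpos, hzero⟩ := (hσ.mem_coneOf_iff_coord Finset.inter_subset_right).1
    (hτσ ⟨hxτ, coneOf_blowUpCone_subset h1 h2 hxσ₁⟩)
  have hsub : (τ ∩ σ).erase ε₂ ⊆ τ ∩ blowUpCone σ ε₁ ε₂ := fun v hv => by
    simp only [Finset.mem_erase, Finset.mem_inter] at hv
    simp [blowUpCone, hv]
  refine coneOf_mono hsub ((hσ.mem_coneOf_iff_coord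
    ((Finset.erase_subset _ _).trans Finset.inter_subset_right)).2 ⟨hpos, fun v hv => ?_⟩)
  -- `τ ∩ σ` misses `ε₁` or `ε₂`; if it contains `ε₂`, then `0 ≤ x_{ε₂} ≤ x_{ε₁} = 0`.
  rcases eq_or_ne v ε₂ with rfl | hv2
  · by_cases hvτ : v ∈ τ
    · have : hσ.coord ε₁ x = 0 := hzero ε₁ fun h => hτ12 ⟨(Finset.mem_inter.1 h).1, hvτ⟩
      exact le_antisymm (this ▸ hle) (hpos v)
    · exact hzero v fun h => hvτ (Finset.mem_inter.1 h).1
  · exact hzero v fun h => hv (Finset.mem_erase.2 ⟨hv2, h⟩)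

lemma coneOf_blowUpCone_inter_coneOf_blowUpCone_subset (hσ : IsNsCone d σ)
    (hσσ' : coneOf σ ∩ coneOf σ' ⊆ coneOf (σ ∩ σ')) (h1 : ε₁ ∈ σ) (h2 : ε₂ ∈ σ)
    (h1' : ε₁ ∈ σ') (h2' : ε₂ ∈ σ') (hne : ε₁ ≠ ε₂) :
    coneOf (blowUpCone σ ε₁ ε₂) ∩ coneOf (blowUpCone σ' ε₁ ε₂) ⊆
      coneOf (blowUpCone σ ε₁ ε₂ ∩ blowUpCone σ' ε₁ ε₂) := by
  rintro x ⟨hxσ₁, hxσ'₁⟩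
  have hx : x ∈ coneOf (σ ∩ σ') :=
    hσσ' ⟨coneOf_blowUpCone_subset h1 h2 hxσ₁, coneOf_blowUpCone_subset h1' h2' hxσ'₁⟩
  refine coneOf_mono (fun v hv => ?_) (hσ.mem_coneOf_blowUpCone Finset.inter_subset_left
    (Finset.mem_inter.2 ⟨h1, h1'⟩) (Finset.mem_inter.2 ⟨h2, h2'⟩) hne hx
    (hσ.coord_le_of_mem_coneOf_blowUpCone h1 h2 hne hxσ₁))
  simp only [blowUpCone, Finset.mem_insert, Finset.mem_erase, Finset.mem_inter] at hv ⊢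
  tauto

lemma coneOf_blowUpCone_inter_coneOf_blowUpCone_swap_subset (hσ : IsNsCone d σ)
    (hσ' : IsNsCone d σ') (hσσ' : coneOf σ ∩ coneOf σ' ⊆ coneOf (σ ∩ σ')) (h1 : ε₁ ∈ σ)
    (h2 : ε₂ ∈ σ) (h1' : ε₁ ∈ σ') (h2' : ε₂ ∈ σ') (hne : ε₁ ≠ ε₂) :
    coneOf (blowUpCone σ ε₁ ε₂) ∩ coneOf (blowUpCone σ' ε₂ ε₁) ⊆
      coneOf (blowUpCone σ ε₁ ε₂ ∩ blowUpCone σ' ε₂ ε₁) := by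
  rintro x ⟨hxσ₁, hxσ'₂⟩
  have hx : x ∈ coneOf (σ ∩ σ') :=
    hσσ' ⟨coneOf_blowUpCone_subset h1 h2 hxσ₁, coneOf_blowUpCone_subset h2' h1' hxσ'₂⟩
  have hpos := ((hσ.mem_coneOf_iff_coord Finset.inter_subset_left).1 hx).1
  have hcoord :=
    hσ.coord_eq_of_mem_coneOf hσ' Finset.inter_subset_left Finset.inter_subset_right hx
  have heq : hσ.coord ε₁ x = hσ.coord ε₂ x := le_antisymm
    (hcoord ε₁ ▸ hcoord ε₂ ▸ hσ'.coord_le_of_mem_coneOf_blowUpCone h2' h1' hne.symm hxσ'₂)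
    (hσ.coord_le_of_mem_coneOf_blowUpCone h1 h2 hne hxσ₁)
  rw [← hσ.coord_smul_add_sum_eq Finset.inter_subset_left (Finset.mem_inter.2 ⟨h1, h1'⟩)
    (Finset.mem_inter.2 ⟨h2, h2'⟩) hne hx, heq, sub_self, zero_smul, add_zero]
  refine add_mem_coneOf (smul_mem_coneOf (hpos ε₂) (mem_coneOf_self ?_))
    (sum_mem_coneOf (fun v hv => ?_) fun v _ => hpos v)
  · simp [blowUpCone, add_comm]
  · simp only [blowUpCone, Finset.mem_insert, Finset.mem_erase, Finset.mem_inter] at hv ⊢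
    tauto

end BlowUpIntersections

section BlowUp

variable {F : Finset (Finset (Fin d → ℤ))} {ε₁ ε₂ : Fin d → ℤ}

lemma isNsCone_of_mem_blowUp (hns : ∀ σ ∈ F, IsNsCone d σ) (hne : ε₁ ≠ ε₂)
    {ρ : Finset (Fin d → ℤ)} (hρ : ρ ∈ blowUp F ε₁ ε₂) : IsNsCone d ρ := by
  rcases mem_blowUp_iff.1 hρ with ⟨hρF, -⟩ | ⟨σ, hσ, h1, h2, rfl | rfl⟩
  · exact hns ρ hρF
  · exact isNsCone_blowUpCone (hns σ hσ) h1 h2 hne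
  · exact isNsCone_blowUpCone (hns σ hσ) h2 h1 hne.symm

lemma coneOf_inter_coneOf_of_mem_blowUp (hns : ∀ σ ∈ F, IsNsCone d σ)
    (hF : ∀ σ ∈ F, ∀ σ' ∈ F, coneOf σ ∩ coneOf σ' = coneOf (σ ∩ σ')) (hne : ε₁ ≠ ε₂)
    {ρ ρ' : Finset (Fin d → ℤ)} (hρ : ρ ∈ blowUp F ε₁ ε₂) (hρ' : ρ' ∈ blowUp F ε₁ ε₂) :
    coneOf ρ ∩ coneOf ρ' = coneOf (ρ ∩ ρ') := by
  refine subset_antisymm ?_ coneOf_inter_subset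
  have hsymm {ρ ρ' : Finset (Fin d → ℤ)} (h : coneOf ρ' ∩ coneOf ρ ⊆ coneOf (ρ' ∩ ρ)) :
      coneOf ρ ∩ coneOf ρ' ⊆ coneOf (ρ ∩ ρ') := by
    rwa [Set.inter_comm, Finset.inter_comm]
  have hF' σ (hσ : σ ∈ F) σ' (hσ' : σ' ∈ F) := (hF σ hσ σ' hσ').le
  rcases mem_blowUp_iff.1 hρ with ⟨hρF, hρ12⟩ | ⟨σ, hσ, h1, h2, rfl | rfl⟩ <;>
    rcases mem_blowUp_iff.1 hρ' with ⟨hρ'F, hρ'12⟩ | ⟨σ', hσ', h1', h2', rfl | rfl⟩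
  · exact hF' ρ hρF ρ' hρ'F
  · exact coneOf_inter_coneOf_blowUpCone_subset (hns σ' hσ') (hF' ρ hρF σ' hσ') h1' h2' hne
      hρ12
  · exact coneOf_inter_coneOf_blowUpCone_subset (hns σ' hσ') (hF' ρ hρF σ' hσ') h2' h1'
      hne.symm (hρ12 ∘ And.symm)
  · exact hsymm <| coneOf_inter_coneOf_blowUpCone_subset (hns σ hσ) (hF' ρ' hρ'F σ hσ) h1 h2
      hne hρ'12
  · exact coneOf_blowUpCone_inter_coneOf_blowUpCone_subset (hns σ hσ) (hF' σ hσ σ' hσ') h1 h2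
      h1' h2' hne
  · exact coneOf_blowUpCone_inter_coneOf_blowUpCone_swap_subset (hns σ hσ) (hns σ' hσ')
      (hF' σ hσ σ' hσ') h1 h2 h1' h2' hne
  · exact hsymm <| coneOf_inter_coneOf_blowUpCone_subset (hns σ hσ) (hF' ρ' hρ'F σ hσ) h2 h1
      hne.symm (hρ'12 ∘ And.symm)
  · exact coneOf_blowUpCone_inter_coneOf_blowUpCone_swap_subset (hns σ hσ) (hns σ' hσ')
      (hF' σ hσ σ' hσ') h2 h1 h2' h1' hne.symm
  · exact coneOf_blowUpCone_inter_coneOf_blowUpCone_subset (hns σ hσ) (hF' σ hσ σ' hσ') h2 h1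
      h2' h1' hne.symm

end BlowUp

theorem stmt0_general (d : ℕ) (F : Finset (Finset (Fin d → ℤ)))
    (hns : ∀ σ ∈ F, IsNsCone d σ) (hgen : IsGenerable F)
    (ε₁ ε₂ : Fin d → ℤ) (hne : ε₁ ≠ ε₂) :
    (∀ σ ∈ blowUp F ε₁ ε₂, IsNsCone d σ) ∧ IsGenerable (blowUp F ε₁ ε₂) := by
  have hnsB : ∀ ρ ∈ blowUp F ε₁ ε₂, IsNsCone d ρ := fun ρ => isNsCone_of_mem_blowUp hns hne
  refine ⟨hnsB, (isGenerable_iff hnsB).2 fun ρ hρ ρ' hρ' => ?_⟩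
  exact coneOf_inter_coneOf_of_mem_blowUp hns ((isGenerable_iff hns).1 hgen) hne hρ hρ'

/-- the standard blow-up of a generable set of `d`-dimensional nonsingular
cones in `ℤ^d` along two distinct edges `ε₁ ≠ ε₂` with `Σ(ε₁) ∩ Σ(ε₂) ≠ ∅` is again a
generable set of `d`-dimensional nonsingular cones in `ℤ^d`. -/
theorem stmt0 (d : ℕ) (F : Finset (Finset (Fin d → ℤ)))
    (hns : ∀ σ ∈ F, IsNsCone d σ) (hgen : IsGenerable F)
    (ε₁ ε₂ : Fin d → ℤ) (hne : ε₁ ≠ ε₂)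
    (h1 : ε₁ ∈ edges F) (h2 : ε₂ ∈ edges F)
    (hmeet : ∃ σ ∈ F, ε₁ ∈ σ ∧ ε₂ ∈ σ) :
    (∀ σ ∈ blowUp F ε₁ ε₂, IsNsCone d σ) ∧ IsGenerable (blowUp F ε₁ ε₂) :=
  stmt0_general d F hns hgen ε₁ ε₂ hne
end

section
/- Let Σ be a generable set of d-dimensional nonsingular cones in ℤ^d and let B be a d×2 integer matrix. If Σ̃ → Σ is a B-good standard blow-up, then μ_B(Σ̃) ≤ μ_B(Σ); furthermore, if μ_B(Σ̃) = μ_B(Σ), then ν_B(Σ̃) < ν_B(Σ). -/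
open Finset

/-- For a `d × n` integer matrix `B` and an edge with primitive generator `ε`,
`bEdge B ε i = Σ_j ε_j b_{j i}`. -/
def bEdge {d n : ℕ} (B : Matrix (Fin d) (Fin n) ℤ) (ε : Fin d → ℤ) (i : Fin n) : ℤ :=
  ∑ j, ε j * B j i

/-- `B` is `σ`-good: there is a permutation `γ` of the column indices such that
`b_{ε γ(1)} ≤ ⋯ ≤ b_{ε γ(n)}` for every edge `ε` of `σ`. -/
def GoodCone {d n : ℕ} (B : Matrix (Fin d) (Fin n) ℤ) (σ : Finset (Fin d → ℤ)) : Prop :=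
  ∃ γ : Equiv.Perm (Fin n), ∀ ε ∈ σ, Monotone fun i => bEdge B ε (γ i)

/-- `B` is `Σ`-good: it is `σ`-good for every `σ ∈ Σ`. -/
def GoodFan {d n : ℕ} (B : Matrix (Fin d) (Fin n) ℤ) (F : Finset (Finset (Fin d → ℤ))) :
    Prop :=
  ∀ σ ∈ F, GoodCone B σ

open scoped Classical

/-- For a `d × 2` matrix `B`, `deltaB B ε = b_{ε 1} - b_{ε 2}`. -/
def deltaB {d : ℕ} (B : Matrix (Fin d) (Fin 2) ℤ) (ε : Fin d → ℤ) : ℤ :=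
  bEdge B ε 0 - bEdge B ε 1

/-- `Σ_bad(B)`: the cones of `Σ` for which `B` is not good. -/
noncomputable def badCones {d : ℕ} (B : Matrix (Fin d) (Fin 2) ℤ)
    (F : Finset (Finset (Fin d → ℤ))) : Finset (Finset (Fin d → ℤ)) :=
  F.filter (fun σ => ¬ GoodCone B σ)

/-- `μ_B(Σ) = max { |b_{ε1} - b_{ε2}| : ε ∈ E(Σ_bad(B)) }`, and `0` if `Σ_bad(B) = ∅`. -/
noncomputable def muB {d : ℕ} (B : Matrix (Fin d) (Fin 2) ℤ)
    (F : Finset (Finset (Fin d → ℤ))) : ℕ :=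
  (edges (badCones B F)).sup fun ε => (deltaB B ε).natAbs

/-- `E_B(Σ)`: the edges of `Σ_bad(B)` realizing the maximum `μ_B(Σ)`
(empty if `Σ_bad(B) = ∅`). -/
noncomputable def EB {d : ℕ} (B : Matrix (Fin d) (Fin 2) ℤ)
    (F : Finset (Finset (Fin d → ℤ))) : Finset (Fin d → ℤ) :=
  (edges (badCones B F)).filter fun ε => (deltaB B ε).natAbs = muB B F

/-- `E_B(Σ, ε) = {ε' ∈ E(Σ_bad(B)) ∩ E(Σ(ε)) : (b_{ε1} - b_{ε2})(b_{ε'1} - b_{ε'2}) < 0}`. -/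
noncomputable def EBe {d : ℕ} (B : Matrix (Fin d) (Fin 2) ℤ)
    (F : Finset (Finset (Fin d → ℤ))) (ε : Fin d → ℤ) : Finset (Fin d → ℤ) :=
  ((edges (badCones B F)) ∩ edges (F.filter fun σ => ε ∈ σ)).filter
    fun ε' => deltaB B ε * deltaB B ε' < 0

/-- `ν_B(Σ) = Σ_{ε ∈ E_B(Σ)} #E_B(Σ, ε)`. -/
noncomputable def nuB {d : ℕ} (B : Matrix (Fin d) (Fin 2) ℤ)
    (F : Finset (Finset (Fin d → ℤ))) : ℕ :=
  ∑ ε ∈ EB B F, (EBe B F ε).card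

/-- `F'` is a `B`-good standard blow-up of `F`: it is the standard blow-up of `F` along
some `ε₁ ∈ E_B(F)` and `ε₂ ∈ E_B(F, ε₁)` with `|b_{ε₂1} - b_{ε₂2}|` maximal among
`E_B(F, ε₁)`. -/
noncomputable def IsBGoodBlowUp {d : ℕ} (B : Matrix (Fin d) (Fin 2) ℤ)
    (F F' : Finset (Finset (Fin d → ℤ))) : Prop :=
  ∃ ε₁ ε₂ : Fin d → ℤ,
    ε₁ ≠ ε₂ ∧ ε₁ ∈ edges F ∧ ε₂ ∈ edges F ∧ (∃ σ ∈ F, ε₁ ∈ σ ∧ ε₂ ∈ σ) ∧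
    ε₁ ∈ EB B F ∧ ε₂ ∈ EBe B F ε₁ ∧
    (deltaB B ε₂).natAbs = (EBe B F ε₁).sup (fun ε => (deltaB B ε).natAbs) ∧
    F' = blowUp F ε₁ ε₂

private def castV {d : ℕ} (v : Fin d → ℤ) : Fin d → ℝ := fun l => (v l : ℝ)

private lemma castV_add {d : ℕ} (v w : Fin d → ℤ) : castV (v + w) = castV v + castV w := by
  funext l; simp [castV]

private def castL (d : ℕ) : (Fin d → ℤ) →ₗ[ℤ] (Fin d → ℝ) where
  toFun := castV
  map_add' := castV_add
  map_smul' := by intro m v; funext l; simp [castV]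

private lemma nsCone_linearIndependent {d : ℕ} {σ : Finset (Fin d → ℤ)} (h : IsNsCone d σ) :
    LinearIndependent ℝ (fun v : σ => castV (v : Fin d → ℤ)) := by
  apply linearIndependent_of_top_le_span_of_card_eq_finrank
  · -- spans
    have hmem : ∀ w : Fin d → ℤ, castV w ∈ Submodule.span ℝ (Set.range fun v : σ => castV (v : Fin d → ℤ)) := by
      intro w
      have hw : w ∈ Submodule.span ℤ ((σ : Set (Fin d → ℤ))) := by rw [h.2]; trivial
      have h1 : castL d w ∈ Submodule.map (castL d) (Submodule.span ℤ (σ : Set (Fin d → ℤ))) :=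
        Submodule.mem_map_of_mem hw
      rw [Submodule.map_span] at h1
      have h2 := Submodule.span_le_restrictScalars ℤ ℝ (castL d '' (σ : Set (Fin d → ℤ)))
      have h3 := h2 h1
      rw [Submodule.restrictScalars_mem] at h3
      have : (castL d '' (σ : Set (Fin d → ℤ))) = Set.range fun v : σ => castV (v : Fin d → ℤ) := by
        ext x
        simp only [Set.mem_image, Set.mem_range, Finset.mem_coe]
        constructor
        · rintro ⟨v, hv, rfl⟩; exact ⟨⟨v, hv⟩, rfl⟩
        · rintro ⟨⟨v, hv⟩, rfl⟩; exact ⟨v, hv, rfl⟩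
      rwa [this] at h3
    intro x _
    have hsingle : ∀ i : Fin d, castV (Pi.single i 1) = fun j => if i = j then (1:ℝ) else 0 := by
      intro i; funext l; simp [castV, Pi.single_apply, eq_comm]
    have hx : x = ∑ i : Fin d, x i • castV (Pi.single i 1) := by
      conv_lhs => rw [pi_eq_sum_univ x]
      exact Finset.sum_congr rfl fun i _ => by rw [hsingle i]
    rw [hx]
    exact Submodule.sum_mem _ fun i _ => Submodule.smul_mem _ _ (hmem _)
  · rw [Fintype.card_coe, h.1, Module.finrank_fin_fun]

private lemma unique_coeff {d : ℕ} {σ : Finset (Fin d → ℤ)} (h : IsNsCone d σ)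
    (a b : (Fin d → ℤ) → ℝ)
    (hab : ∑ v ∈ σ, a v • castV v = ∑ v ∈ σ, b v • castV v) :
    ∀ v ∈ σ, a v = b v := by
  have hli := nsCone_linearIndependent h
  rw [linearIndependent_iff'] at hli
  intro v hv
  have key : ∑ i ∈ Finset.univ, (fun i : σ => a i - b i) i • castV (i : Fin d → ℤ) = 0 := by
    have : ∑ i : σ, (a i - b i) • castV (i : Fin d → ℤ)
        = ∑ v ∈ σ, (a v - b v) • castV v := Finset.sum_coe_sort σ (fun v => (a v - b v) • castV v)
    rw [this]
    simp only [sub_smul, Finset.sum_sub_distrib, hab, sub_self]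
  have := hli Finset.univ (fun i : σ => a i - b i) key ⟨v, hv⟩ (Finset.mem_univ _)
  simpa [sub_eq_zero] using this

private lemma mem_edges' {d : ℕ} {F : Finset (Finset (Fin d → ℤ))} {ε : Fin d → ℤ} :
    ε ∈ edges F ↔ ∃ σ ∈ F, ε ∈ σ := by
  simp [edges]

private lemma sum_ext {d : ℕ} {σ : Finset (Fin d → ℤ)} {s : Finset (Fin d → ℤ)} (hs : s ⊆ σ)
    (c : (Fin d → ℤ) → ℝ) :
    ∑ v ∈ s, c v • castV v = ∑ v ∈ σ, (if v ∈ s then c v else 0) • castV v := by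
  rw [← Finset.sum_subset hs (fun v _ hv => by rw [if_neg hv, zero_smul])]
  exact Finset.sum_congr rfl fun v hv => by rw [if_pos hv]

/-- The exceptional ray is not an edge of the original fan. -/
private lemma exceptional_not_edge {d : ℕ} {F : Finset (Finset (Fin d → ℤ))}
    (hns : ∀ σ ∈ F, IsNsCone d σ) (hgen : IsGenerable F)
    {σ : Finset (Fin d → ℤ)} (hσ : σ ∈ F) {ε₁ ε₂ : Fin d → ℤ}
    (h1 : ε₁ ∈ σ) (h2 : ε₂ ∈ σ) (hne : ε₁ ≠ ε₂) : ε₁ + ε₂ ∉ edges F := by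
  intro hmem
  have hne' : ε₂ ≠ ε₁ := fun h => hne h.symm
  obtain ⟨τ, hτ, hτm⟩ := mem_edges'.mp hmem
  have hpair : ({ε₁, ε₂} : Finset (Fin d → ℤ)) ⊆ σ := by
    intro v hv; rcases Finset.mem_insert.mp hv with rfl | hv
    · exact h1
    · rw [Finset.mem_singleton] at hv; subst hv; exact h2
  have hsing : ({ε₁ + ε₂} : Finset (Fin d → ℤ)) ⊆ τ := Finset.singleton_subset_iff.mpr hτm
  obtain ⟨⟨t, ht, hcone⟩, -⟩ := hgen σ hσ τ hτ _ hpair _ hsing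
  -- coneOf {ε₁+ε₂} ⊆ coneOf {ε₁, ε₂}
  have hsub : coneOf ({ε₁ + ε₂} : Finset (Fin d → ℤ)) ⊆ coneOf ({ε₁, ε₂} : Finset (Fin d → ℤ)) := by
    rintro x ⟨c, hc0, rfl⟩
    refine ⟨fun _ => c (ε₁ + ε₂), fun _ => hc0 _, ?_⟩
    rw [Finset.sum_singleton, Finset.sum_pair hne]
    show c (ε₁ + ε₂) • castV (ε₁ + ε₂) = c (ε₁ + ε₂) • castV ε₁ + c (ε₁ + ε₂) • castV ε₂
    rw [castV_add, smul_add]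
  have hEq : coneOf ({ε₁ + ε₂} : Finset (Fin d → ℤ)) = coneOf t := by
    rw [← hcone, Set.inter_eq_self_of_subset_right hsub]
  -- castV (ε₁+ε₂) belongs to coneOf {ε₁+ε₂}
  have hx : castV (ε₁ + ε₂) ∈ coneOf ({ε₁ + ε₂} : Finset (Fin d → ℤ)) := by
    refine ⟨fun v => if v = ε₁ + ε₂ then 1 else 0, fun v => by positivity, ?_⟩
    rw [Finset.sum_singleton]
    show castV (ε₁ + ε₂) = (if ε₁ + ε₂ = ε₁ + ε₂ then (1:ℝ) else 0) • castV (ε₁ + ε₂)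
    rw [if_pos rfl, one_smul]
  rw [hEq] at hx
  obtain ⟨c, hc0, hcs⟩ := hx
  have hcs2 : castV (ε₁ + ε₂) = ∑ v ∈ t, c v • castV v := hcs
  -- rewrite both representations as sums over σ and use uniqueness
  have hσns := hns σ hσ
  have hrep1 : castV ε₁ + castV ε₂
      = ∑ v ∈ σ, (if v ∈ ({ε₁, ε₂} : Finset (Fin d → ℤ)) then (1:ℝ) else 0) • castV v := by
    rw [← sum_ext hpair (fun _ => (1:ℝ)), Finset.sum_pair hne, one_smul, one_smul]
  have hrep2 : castV ε₁ + castV ε₂ = ∑ v ∈ σ, (if v ∈ t then c v else 0) • castV v := by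
    rw [← sum_ext ht c, ← hcs2, castV_add]
  have huniq := unique_coeff hσns _ _ (hrep1.symm.trans hrep2)
  have hε₁t : ε₁ ∈ t := by
    have h' := huniq ε₁ h1
    rw [if_pos (Finset.mem_insert_self _ _)] at h'
    by_contra hnot
    rw [if_neg hnot] at h'
    exact one_ne_zero h'
  -- castV ε₁ ∈ coneOf t = coneOf {ε₁+ε₂}
  have hx1 : castV ε₁ ∈ coneOf t := by
    refine ⟨fun v => if v = ε₁ then 1 else 0, fun v => by positivity, ?_⟩
    rw [Finset.sum_eq_single_of_mem ε₁ hε₁t (fun v _ hv => by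
      show (if v = ε₁ then (1:ℝ) else 0) • castV v = 0
      rw [if_neg hv, zero_smul])]
    show castV ε₁ = (if ε₁ = ε₁ then (1:ℝ) else 0) • castV ε₁
    rw [if_pos rfl, one_smul]
  rw [← hEq] at hx1
  obtain ⟨c', hc'0, hcs'⟩ := hx1
  rw [Finset.sum_singleton] at hcs'
  set r := c' (ε₁ + ε₂) with hr
  have hcs'' : castV ε₁ = r • castV (ε₁ + ε₂) := hcs'
  have l1 : ∑ v ∈ σ, (if v = ε₁ then (1:ℝ) else 0) • castV v = castV ε₁ := by
    rw [Finset.sum_eq_single_of_mem ε₁ h1 (fun v _ hv => by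
      rw [if_neg hv, zero_smul]), if_pos rfl, one_smul]
  have l2 : ∑ v ∈ σ, (if v = ε₁ then r else if v = ε₂ then r else 0) • castV v
      = r • castV ε₁ + r • castV ε₂ := by
    have hvan : ∀ v ∈ σ, v ∉ ({ε₁, ε₂} : Finset (Fin d → ℤ)) →
        (if v = ε₁ then r else if v = ε₂ then r else 0) • castV v = 0 := by
      intro v _ hv
      have hv1 : v ≠ ε₁ := fun h => hv (h ▸ Finset.mem_insert_self _ _)
      have hv2 : v ≠ ε₂ := fun h => hv (by simp [h])
      rw [if_neg hv1, if_neg hv2, zero_smul]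
    rw [← Finset.sum_subset hpair hvan, Finset.sum_pair hne]
    simp [hne']
  have hfin : ∑ v ∈ σ, (if v = ε₁ then (1:ℝ) else 0) • castV v
      = ∑ v ∈ σ, (if v = ε₁ then r else if v = ε₂ then r else 0) • castV v := by
    rw [l1, l2]
    exact hcs''.trans (by rw [castV_add, smul_add])
  have huniq2 := unique_coeff hσns _ _ hfin
  have e1 := huniq2 ε₁ h1
  have e2 := huniq2 ε₂ h2
  simp only [if_pos rfl, if_neg hne'] at e1 e2
  exact one_ne_zero (e1.trans e2.symm)

private lemma bEdge_add {d n : ℕ} (B : Matrix (Fin d) (Fin n) ℤ) (v w : Fin d → ℤ) (i : Fin n) :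
    bEdge B (v + w) i = bEdge B v i + bEdge B w i := by
  unfold bEdge
  rw [← Finset.sum_add_distrib]
  exact Finset.sum_congr rfl fun j _ => by simp [add_mul]

private lemma deltaB_add {d : ℕ} (B : Matrix (Fin d) (Fin 2) ℤ) (v w : Fin d → ℤ) :
    deltaB B (v + w) = deltaB B v + deltaB B w := by
  unfold deltaB
  rw [bEdge_add, bEdge_add]; ring

private lemma not_goodCone {d : ℕ} (B : Matrix (Fin d) (Fin 2) ℤ) {σ : Finset (Fin d → ℤ)}
    {ε₁ ε₂ : Fin d → ℤ} (h1 : ε₁ ∈ σ) (h2 : ε₂ ∈ σ)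
    (hsign : deltaB B ε₁ * deltaB B ε₂ < 0) : ¬ GoodCone B σ := by
  rintro ⟨γ, hγ⟩
  have h01 : (0 : Fin 2) ≤ 1 := by decide
  have key : ∀ ε ∈ σ, bEdge B ε (γ 0) ≤ bEdge B ε (γ 1) := fun ε hε => hγ ε hε h01
  have hcases : ∀ x : Fin 2, x = 0 ∨ x = 1 := by decide
  have k1 := key ε₁ h1
  have k2 := key ε₂ h2
  rcases hcases (γ 0) with hg0 | hg0
  · have hg1 : γ 1 = 1 := by
      rcases hcases (γ 1) with h | h
      · exact absurd (γ.injective (hg0.trans h.symm)) (by decide)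
      · exact h
    rw [hg0, hg1] at k1 k2
    have d1 : deltaB B ε₁ ≤ 0 := sub_nonpos.mpr k1
    have d2 : deltaB B ε₂ ≤ 0 := sub_nonpos.mpr k2
    nlinarith
  · have hg1 : γ 1 = 0 := by
      rcases hcases (γ 1) with h | h
      · exact h
      · exact absurd (γ.injective (hg0.trans h.symm)) (by decide)
    rw [hg0, hg1] at k1 k2
    have d1 : 0 ≤ deltaB B ε₁ := sub_nonneg.mpr k1
    have d2 : 0 ≤ deltaB B ε₂ := sub_nonneg.mpr k2
    nlinarith

private lemma mem_blowUp {d : ℕ} {F : Finset (Finset (Fin d → ℤ))} {ε₁ ε₂ : Fin d → ℤ}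
    {τ : Finset (Fin d → ℤ)} :
    τ ∈ blowUp F ε₁ ε₂ ↔ (τ ∈ F ∧ ¬(ε₁ ∈ τ ∧ ε₂ ∈ τ)) ∨
      ∃ σ ∈ F, (ε₁ ∈ σ ∧ ε₂ ∈ σ) ∧
        (τ = insert (ε₁ + ε₂) (σ.erase ε₂) ∨ τ = insert (ε₁ + ε₂) (σ.erase ε₁)) := by
  unfold blowUp
  simp only [Finset.mem_union, Finset.mem_filter, Finset.mem_biUnion, Finset.mem_insert,
    Finset.mem_singleton]
  constructor
  · rintro (⟨h1, h2⟩ | ⟨σ, ⟨hσ, hσ2⟩, h⟩)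
    · exact Or.inl ⟨h1, h2⟩
    · exact Or.inr ⟨σ, hσ, hσ2, h⟩
  · rintro (⟨h1, h2⟩ | ⟨σ, hσ, hσ2, h⟩)
    · exact Or.inl ⟨h1, h2⟩
    · exact Or.inr ⟨σ, ⟨hσ, hσ2⟩, h⟩

private lemma mem_badCones {d : ℕ} {B : Matrix (Fin d) (Fin 2) ℤ}
    {F : Finset (Finset (Fin d → ℤ))} {σ : Finset (Fin d → ℤ)} :
    σ ∈ badCones B F ↔ σ ∈ F ∧ ¬ GoodCone B σ := by
  unfold badCones; exact Finset.mem_filter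

private lemma mem_EB {d : ℕ} {B : Matrix (Fin d) (Fin 2) ℤ}
    {F : Finset (Finset (Fin d → ℤ))} {ε : Fin d → ℤ} :
    ε ∈ EB B F ↔ ε ∈ edges (badCones B F) ∧ (deltaB B ε).natAbs = muB B F := by
  unfold EB; exact Finset.mem_filter

private lemma mem_EBe {d : ℕ} {B : Matrix (Fin d) (Fin 2) ℤ}
    {F : Finset (Finset (Fin d → ℤ))} {ε ε' : Fin d → ℤ} :
    ε' ∈ EBe B F ε ↔ (ε' ∈ edges (badCones B F) ∧ ε' ∈ edges (F.filter fun σ => ε ∈ σ)) ∧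
      deltaB B ε * deltaB B ε' < 0 := by
  unfold EBe; rw [Finset.mem_filter, Finset.mem_inter]

private lemma muB_def {d : ℕ} (B : Matrix (Fin d) (Fin 2) ℤ) (F : Finset (Finset (Fin d → ℤ))) :
    muB B F = (edges (badCones B F)).sup (fun ε => (deltaB B ε).natAbs) := rfl

/-- if `Σ̃ → Σ` is a `B`-good standard blow-up then `μ_B(Σ̃) ≤ μ_B(Σ)`,
and if moreover `μ_B(Σ̃) = μ_B(Σ)` then `ν_B(Σ̃) < ν_B(Σ)`. -/
theorem stmt3 (d : ℕ) (F F' : Finset (Finset (Fin d → ℤ)))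
    (hns : ∀ σ ∈ F, IsNsCone d σ) (hgen : IsGenerable F)
    (B : Matrix (Fin d) (Fin 2) ℤ)
    (hblow : IsBGoodBlowUp B F F') :
    muB B F' ≤ muB B F ∧ (muB B F' = muB B F → nuB B F' < nuB B F) := by
  obtain ⟨ε₁, ε₂, hne, hε₁F, hε₂F, ⟨σ₀, hσ₀F, hε₁σ₀, hε₂σ₀⟩, hEB1, hEBe2, hmax, hF'⟩ := hblow
  subst hF'
  have hEB1' := mem_EB.mp hEB1
  obtain ⟨h1bad, h1μ⟩ := hEB1'
  have hEBe2' := mem_EBe.mp hEBe2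
  obtain ⟨⟨h2bad, h2adj⟩, hsign⟩ := hEBe2'
  have h2le : (deltaB B ε₂).natAbs ≤ muB B F := by rw [muB_def B F]; exact Finset.le_sup (f := fun ε => (deltaB B ε).natAbs) h2bad
  have hex : ε₁ + ε₂ ∉ edges F := exceptional_not_edge hns hgen hσ₀F hε₁σ₀ hε₂σ₀ hne
  have hne1ex : ε₁ ≠ ε₁ + ε₂ := fun h => hex (h ▸ hε₁F)
  have hne2ex : ε₂ ≠ ε₁ + ε₂ := fun h => hex (h ▸ hε₂F)
  have hbadσ : ∀ σ ∈ F, ε₁ ∈ σ → ε₂ ∈ σ → σ ∈ badCones B F := fun σ hσ h1 h2 =>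
    mem_badCones.mpr ⟨hσ, not_goodCone B h1 h2 hsign⟩
  have hsplit := mul_neg_iff.mp hsign
  have hdadd : deltaB B (ε₁ + ε₂) = deltaB B ε₁ + deltaB B ε₂ := deltaB_add B ε₁ ε₂
  have hlt : (deltaB B (ε₁ + ε₂)).natAbs < muB B F := by
    rw [hdadd]; rcases hsplit with ⟨ha, hb⟩ | ⟨ha, hb⟩ <;> omega
  -- every edge of a bad cone of the blow-up is the exceptional edge or an edge
  -- of a bad cone of F
  have keyA : ∀ ε' ∈ edges (badCones B (blowUp F ε₁ ε₂)),
      ε' = ε₁ + ε₂ ∨ ε' ∈ edges (badCones B F) := by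
    intro ε' hε'
    obtain ⟨τ, hτ, hτm⟩ := mem_edges'.mp hε'
    obtain ⟨hτmem, hτbad⟩ := mem_badCones.mp hτ
    rcases mem_blowUp.mp hτmem with ⟨hτF, -⟩ | ⟨σ, hσF, ⟨h1σ, h2σ⟩, hτeq⟩
    · exact Or.inr (mem_edges'.mpr ⟨τ, mem_badCones.mpr ⟨hτF, hτbad⟩, hτm⟩)
    · rcases hτeq with rfl | rfl <;>
      · rcases Finset.mem_insert.mp hτm with h | h
        · exact Or.inl h
        · exact Or.inr (mem_edges'.mpr ⟨σ, hbadσ σ hσF h1σ h2σ, Finset.mem_of_mem_erase h⟩)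
  -- adjacency in the blow-up implies adjacency in F (away from the exceptional edge)
  have keyB : ∀ ε ε' : Fin d → ℤ, ε ≠ ε₁ + ε₂ → ε' ≠ ε₁ + ε₂ →
      ε' ∈ edges ((blowUp F ε₁ ε₂).filter fun σ => ε ∈ σ) →
      ε' ∈ edges (F.filter fun σ => ε ∈ σ) := by
    intro ε ε' hεne hε'ne h
    obtain ⟨τ, hτ, hτm⟩ := mem_edges'.mp h
    obtain ⟨hτmem, hετ⟩ := Finset.mem_filter.mp hτ
    rcases mem_blowUp.mp hτmem with ⟨hτF, -⟩ | ⟨σ, hσF, ⟨h1σ, h2σ⟩, hτeq⟩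
    · exact mem_edges'.mpr ⟨τ, Finset.mem_filter.mpr ⟨hτF, hετ⟩, hτm⟩
    · have hεσ : ε ∈ σ := by
        rcases hτeq with rfl | rfl <;>
        · rcases Finset.mem_insert.mp hετ with h' | h'
          · exact absurd h' hεne
          · exact Finset.mem_of_mem_erase h'
      have hε'σ : ε' ∈ σ := by
        rcases hτeq with rfl | rfl <;>
        · rcases Finset.mem_insert.mp hτm with h' | h'
          · exact absurd h' hε'ne
          · exact Finset.mem_of_mem_erase h'
      exact mem_edges'.mpr ⟨σ, Finset.mem_filter.mpr ⟨hσF, hεσ⟩, hε'σ⟩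
  -- adjacency to the exceptional edge
  have keyC : ∀ ε : Fin d → ℤ, ε ≠ ε₁ + ε₂ →
      ε₁ + ε₂ ∈ edges ((blowUp F ε₁ ε₂).filter fun σ => ε ∈ σ) →
      ∃ σ ∈ F, ε ∈ σ ∧ ε₁ ∈ σ ∧ ε₂ ∈ σ := by
    intro ε hεne h
    obtain ⟨τ, hτ, hτm⟩ := mem_edges'.mp h
    obtain ⟨hτmem, hετ⟩ := Finset.mem_filter.mp hτ
    rcases mem_blowUp.mp hτmem with ⟨hτF, -⟩ | ⟨σ, hσF, ⟨h1σ, h2σ⟩, hτeq⟩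
    · exact absurd (mem_edges'.mpr ⟨τ, hτF, hτm⟩) hex
    · have hεσ : ε ∈ σ := by
        rcases hτeq with rfl | rfl <;>
        · rcases Finset.mem_insert.mp hετ with h' | h'
          · exact absurd h' hεne
          · exact Finset.mem_of_mem_erase h'
      exact ⟨σ, hσF, hεσ, h1σ, h2σ⟩
  -- ε₁ and ε₂ are no longer adjacent in the blow-up
  have keyD : ε₂ ∉ edges ((blowUp F ε₁ ε₂).filter fun σ => ε₁ ∈ σ) := by
    intro h
    obtain ⟨τ, hτ, hτm⟩ := mem_edges'.mp h
    obtain ⟨hτmem, h1τ⟩ := Finset.mem_filter.mp hτ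
    rcases mem_blowUp.mp hτmem with ⟨hτF, hnot⟩ | ⟨σ, hσF, ⟨h1σ, h2σ⟩, hτeq⟩
    · exact hnot ⟨h1τ, hτm⟩
    · rcases hτeq with rfl | rfl
      · rcases Finset.mem_insert.mp hτm with h' | h'
        · exact hne2ex h'
        · exact (Finset.mem_erase.mp h').1 rfl
      · rcases Finset.mem_insert.mp h1τ with h' | h'
        · exact hne1ex h'
        · exact (Finset.mem_erase.mp h').1 rfl
  constructor
  · -- part 1 : μ(F') ≤ μ(F)
    show (edges (badCones B (blowUp F ε₁ ε₂))).sup (fun ε => (deltaB B ε).natAbs) ≤ muB B F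
    refine Finset.sup_le fun ε' hε' => ?_
    rcases keyA ε' hε' with rfl | h
    · exact le_of_lt hlt
    · exact Finset.le_sup (f := fun ε => (deltaB B ε).natAbs) h
  · -- part 2
    intro hμ
    have hEBsub : EB B (blowUp F ε₁ ε₂) ⊆ EB B F := by
      intro ε hε
      obtain ⟨hbad', hval⟩ := mem_EB.mp hε
      rw [hμ] at hval
      rcases keyA ε hbad' with rfl | h
      · exact absurd hval (Nat.ne_of_lt hlt)
      · exact mem_EB.mpr ⟨h, hval⟩
    have hεne_of_EB : ∀ ε ∈ EB B (blowUp F ε₁ ε₂), ε ≠ ε₁ + ε₂ := by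
      rintro ε hε rfl
      obtain ⟨-, hval⟩ := mem_EB.mp hε
      rw [hμ] at hval
      exact Nat.ne_of_lt hlt hval
    have hEBe_sub : ∀ ε ∈ EB B (blowUp F ε₁ ε₂), EBe B (blowUp F ε₁ ε₂) ε ⊆ EBe B F ε := by
      intro ε hε ε' hε'
      have hεne := hεne_of_EB ε hε
      obtain ⟨hεbadF, hεval⟩ := mem_EB.mp (hEBsub hε)
      obtain ⟨⟨h'bad, h'adj⟩, h'sign⟩ := mem_EBe.mp hε'
      by_cases hcase : ε' = ε₁ + ε₂
      · subst hcase
        exfalso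
        obtain ⟨σ, hσF, hεσ, h1σ, h2σ⟩ := keyC ε hεne h'adj
        have hsign2 : deltaB B ε₁ * deltaB B ε < 0 := by
          rw [hdadd] at h'sign
          rcases hsplit with ⟨ha, hb⟩ | ⟨ha, hb⟩ <;>
            rcases mul_neg_iff.mp h'sign with ⟨hc, hd⟩ | ⟨hc, hd⟩
          · exact absurd hd (by omega)
          · exact mul_neg_of_pos_of_neg ha hc
          · exact mul_neg_of_neg_of_pos ha hc
          · exact absurd hd (by omega)
        have hmem : ε ∈ EBe B F ε₁ := mem_EBe.mpr
          ⟨⟨hεbadF, mem_edges'.mpr ⟨σ, Finset.mem_filter.mpr ⟨hσF, h1σ⟩, hεσ⟩⟩, hsign2⟩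
        have hle : (deltaB B ε).natAbs ≤ (deltaB B ε₂).natAbs := by
          rw [hmax]; exact Finset.le_sup (f := fun ε => (deltaB B ε).natAbs) hmem
        have hnz : deltaB B ε₁ + deltaB B ε₂ ≠ 0 := by
          rw [← hdadd]
          intro h0; rw [h0, mul_zero] at h'sign; exact lt_irrefl 0 h'sign
        rcases hsplit with ⟨ha, hb⟩ | ⟨ha, hb⟩ <;> omega
      · rcases keyA ε' h'bad with h | h
        · exact absurd h hcase
        · exact mem_EBe.mpr ⟨⟨h, keyB ε ε' hεne hcase h'adj⟩, h'sign⟩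
    have hD2 : ε₂ ∉ EBe B (blowUp F ε₁ ε₂) ε₁ := fun h => keyD (mem_EBe.mp h).1.2
    have h4 : nuB B F = ∑ ε ∈ EB B F, (EBe B F ε).card := rfl
    have h5 : nuB B (blowUp F ε₁ ε₂)
        = ∑ ε ∈ EB B (blowUp F ε₁ ε₂), (EBe B (blowUp F ε₁ ε₂) ε).card := rfl
    by_cases hc1 : ε₁ ∈ EB B (blowUp F ε₁ ε₂)
    · have hstep : ∑ ε ∈ EB B (blowUp F ε₁ ε₂), (EBe B (blowUp F ε₁ ε₂) ε).card
          < ∑ ε ∈ EB B (blowUp F ε₁ ε₂), (EBe B F ε).card := by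
        apply Finset.sum_lt_sum
        · intro i hi; exact Finset.card_le_card (hEBe_sub i hi)
        · refine ⟨ε₁, hc1, Finset.card_lt_card ?_⟩
          rw [Finset.ssubset_iff_of_subset (hEBe_sub ε₁ hc1)]
          exact ⟨ε₂, hEBe2, hD2⟩
      have hstep2 : ∑ ε ∈ EB B (blowUp F ε₁ ε₂), (EBe B F ε).card
          ≤ ∑ ε ∈ EB B F, (EBe B F ε).card :=
        Finset.sum_le_sum_of_subset hEBsub
      omega
    · have hsub2 : EB B (blowUp F ε₁ ε₂) ⊆ (EB B F).erase ε₁ := fun ε hε =>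
        Finset.mem_erase.mpr ⟨fun h => hc1 (h ▸ hε), hEBsub hε⟩
      have h1 : ∑ ε ∈ EB B (blowUp F ε₁ ε₂), (EBe B (blowUp F ε₁ ε₂) ε).card
          ≤ ∑ ε ∈ (EB B F).erase ε₁, (EBe B F ε).card := by
        calc ∑ ε ∈ EB B (blowUp F ε₁ ε₂), (EBe B (blowUp F ε₁ ε₂) ε).card
            ≤ ∑ ε ∈ EB B (blowUp F ε₁ ε₂), (EBe B F ε).card :=
              Finset.sum_le_sum fun i hi => Finset.card_le_card (hEBe_sub i hi)
          _ ≤ _ := Finset.sum_le_sum_of_subset hsub2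
      have h2 : (EBe B F ε₁).card ≠ 0 := Finset.card_ne_zero_of_mem hEBe2
      have h3 : (EBe B F ε₁).card + ∑ ε ∈ (EB B F).erase ε₁, (EBe B F ε).card
          = ∑ ε ∈ EB B F, (EBe B F ε).card := Finset.add_sum_erase _ (fun ε => (EBe B F ε).card) hEB1
      omega
end

section
/- Let Λ be a commutative ring, let B be a d×n integer matrix, and let σ, σ′ be two d-dimensional nonsingular cones in ℤ^d. In the Laurent polynomial ring R = Λ[t₁^{±1},…,t_d^{±1}][X₀,…,X_n], define g_B(σ) = Σ_{i=1}^{n} X_i · ∏_{ε ∈ E(σ)} (∏_{l=1}^{d} t_l^{u_{σ,ε,l}})^{b_{ε i}^+}. Then there exists c = (c₁,…,c_d) ∈ ℤ^d such that g_B(σ′) = (∏_{l=1}^{d} t_l^{c_l}) · g_B(σ) in R; that is, g_B(σ) and g_B(σ′) differ by a unit monomial in the variables t₁,…,t_d. -/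
open Finset

/-- The Laurent polynomial ring `Λ[t₁^{±1}, …, t_d^{±1}]`, as the group algebra of `ℤ^d`. -/
abbrev Laurent (Λ : Type) [CommRing Λ] (d : ℕ) : Type :=
  AddMonoidAlgebra Λ (Fin d →₀ ℤ)

/-- The monomial `∏_l t_l^{c_l}` in `Λ[t₁^{±1}, …, t_d^{±1}]`. -/
noncomputable def tmon (Λ : Type) [CommRing Λ] {d : ℕ} (c : Fin d → ℤ) : Laurent Λ d :=
  AddMonoidAlgebra.single (Finsupp.equivFunOnFinite.symm c) 1

/-- `b⁺_{ε i} = b_{ε i} - min {b_{ε j} : 1 ≤ j ≤ n}`, as a natural number. -/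
def bplus {d n : ℕ} (B : Matrix (Fin d) (Fin n) ℤ) (ε : Fin d → ℤ) (i : Fin n) : ℕ :=
  Finset.univ.sup fun j : Fin n => (bEdge B ε i - bEdge B ε j).toNat

/-- `g_B(σ) = Σ_{i=1}^n X_i ∏_{ε ∈ E(σ)} (∏_l t_l^{u_{σ,ε,l}})^{b⁺_{ε i}}` in
`Λ[t₁^{±1}, …, t_d^{±1}][X₀, …, X_n]`, where `u ε` is the dual basis vector `u_{σ,ε}`. -/
noncomputable def gB (Λ : Type) [CommRing Λ] {d n : ℕ} (B : Matrix (Fin d) (Fin n) ℤ)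
    (σ : Finset (Fin d → ℤ)) (u : (Fin d → ℤ) → Fin d → ℤ) :
    MvPolynomial (Fin (n + 1)) (Laurent Λ d) :=
  ∑ i : Fin n, MvPolynomial.X i.succ *
    MvPolynomial.C (∏ ε ∈ σ, tmon Λ (u ε) ^ bplus B ε i)

/-! Let `b_i = Bᵀ i` be the `i`-th column of `B` and `m_ε = min_j b_{ε j}`. For a nonsingular
cone `τ` with dual basis `v`, expanding `b_i` in the basis `v` gives `Σ_ε b_{ε i} v_ε = b_i`, hence
`Σ_ε b⁺_{ε i} v_ε = b_i - Σ_ε m_ε v_ε`, where the correction does not depend on `i`. So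
`g_B(τ) = t^{-Σ_ε m_ε v_ε} · Σ_i X_i t^{b_i}`, and the second factor does not depend on `τ`. -/

open Matrix

section Laurent

variable (Λ : Type) [CommRing Λ] {d : ℕ}

lemma tmon_zero : tmon Λ (0 : Fin d → ℤ) = 1 := by
  rw [tmon, AddMonoidAlgebra.one_def]
  exact congrArg (AddMonoidAlgebra.single · 1) (Finsupp.ext fun _ => rfl)

lemma tmon_add (a b : Fin d → ℤ) : tmon Λ (a + b) = tmon Λ a * tmon Λ b := by
  rw [tmon, tmon, tmon, AddMonoidAlgebra.single_mul_single, one_mul]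
  exact congrArg (AddMonoidAlgebra.single · 1) (Finsupp.ext fun _ => rfl)

noncomputable def tmonHom : Multiplicative (Fin d → ℤ) →* Laurent Λ d where
  toFun c := tmon Λ c.toAdd
  map_one' := tmon_zero Λ
  map_mul' := tmon_add Λ

lemma tmonHom_ofAdd (c : Fin d → ℤ) : tmonHom Λ (Multiplicative.ofAdd c) = tmon Λ c := rfl

lemma prod_tmon_pow {ι : Type*} (s : Finset ι) (a : ι → Fin d → ℤ) (k : ι → ℕ) :
    ∏ x ∈ s, tmon Λ (a x) ^ k x = tmon Λ (∑ x ∈ s, k x • a x) := by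
  rw [← tmonHom_ofAdd, ofAdd_sum, map_prod]
  refine Finset.prod_congr rfl fun x _ => ?_
  rw [ofAdd_nsmul, map_pow, tmonHom_ofAdd]

end Laurent

lemma sum_dotProduct_smul_of_dual {R ι : Type*} [CommRing R] [Fintype ι] [DecidableEq (ι → R)]
    (s : Finset (ι → R)) (hs : Submodule.span R (s : Set (ι → R)) = ⊤) (u : (ι → R) → ι → R)
    (hu : ∀ ε ∈ s, ∀ ε' ∈ s, ε' ⬝ᵥ u ε = if ε' = ε then 1 else 0) (w : ι → R) :
    ∑ ε ∈ s, (ε ⬝ᵥ w) • u ε = w := by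
  set y := ∑ ε ∈ s, (ε ⬝ᵥ w) • u ε - w
  have hy_basis : ∀ ε' ∈ s, ε' ⬝ᵥ y = 0 := by
    intro ε' hε'
    have hcoord : ∑ ε ∈ s, (ε ⬝ᵥ w) * (ε' ⬝ᵥ u ε) = ε' ⬝ᵥ w := by
      rw [Finset.sum_congr rfl fun ε hε => by rw [hu ε hε ε' hε', mul_ite, mul_one, mul_zero],
        Finset.sum_ite_eq, if_pos hε']
    simp only [y, dotProduct_sub, dotProduct_sum, dotProduct_smul, smul_eq_mul, hcoord, sub_self]
  have hy_all : (dotProductBilin R R).flip y = 0 := LinearMap.ext_on hs hy_basis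
  have hy : y = 0 := dotProduct_eq_zero y fun x => by
    rw [dotProduct_comm]
    exact LinearMap.congr_fun hy_all x
  exact sub_eq_zero.mp hy

section gB

variable {d n : ℕ} (B : Matrix (Fin d) (Fin n) ℤ)

lemma bEdge_eq_dotProduct (ε : Fin d → ℤ) (i : Fin n) : bEdge B ε i = ε ⬝ᵥ Bᵀ i := rfl

lemma exists_bplus_eq_sub (ε : Fin d → ℤ) : ∃ m : ℤ, ∀ i, (bplus B ε i : ℤ) = bEdge B ε i - m := by
  rcases isEmpty_or_nonempty (Fin n) with hn | hn
  · exact ⟨0, fun i => isEmptyElim i⟩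
  obtain ⟨j₀, hj₀⟩ := Finite.exists_min (bEdge B ε)
  refine ⟨bEdge B ε j₀, fun i => ?_⟩
  have hsup : bplus B ε i = (bEdge B ε i - bEdge B ε j₀).toNat :=
    le_antisymm (Finset.sup_le fun j _ => Int.toNat_le_toNat (by linarith [hj₀ j]))
      (Finset.le_sup (f := fun j => (bEdge B ε i - bEdge B ε j).toNat) (Finset.mem_univ j₀))
  rw [hsup, Int.toNat_of_nonneg (by linarith [hj₀ i])]

variable (Λ : Type) [CommRing Λ] (τ : Finset (Fin d → ℤ)) (v : (Fin d → ℤ) → Fin d → ℤ)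
  (m : (Fin d → ℤ) → ℤ)

lemma prod_tmon_pow_bplus (hτ : Submodule.span ℤ (τ : Set (Fin d → ℤ)) = ⊤)
    (hv : ∀ ε ∈ τ, ∀ ε' ∈ τ, ε' ⬝ᵥ v ε = if ε' = ε then 1 else 0)
    (hm : ∀ ε i, (bplus B ε i : ℤ) = bEdge B ε i - m ε) (i : Fin n) :
    ∏ ε ∈ τ, tmon Λ (v ε) ^ bplus B ε i = tmon Λ (Bᵀ i - ∑ ε ∈ τ, m ε • v ε) := by
  rw [prod_tmon_pow]
  congr 1
  calc ∑ ε ∈ τ, bplus B ε i • v ε = ∑ ε ∈ τ, ((ε ⬝ᵥ Bᵀ i) • v ε - m ε • v ε) :=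
        Finset.sum_congr rfl fun ε _ => by rw [← natCast_zsmul, hm, sub_smul, bEdge_eq_dotProduct]
    _ = Bᵀ i - ∑ ε ∈ τ, m ε • v ε := by
        rw [Finset.sum_sub_distrib, sum_dotProduct_smul_of_dual τ hτ v hv]

lemma gB_eq_C_tmon_mul (hτ : Submodule.span ℤ (τ : Set (Fin d → ℤ)) = ⊤)
    (hv : ∀ ε ∈ τ, ∀ ε' ∈ τ, ε' ⬝ᵥ v ε = if ε' = ε then 1 else 0)
    (hm : ∀ ε i, (bplus B ε i : ℤ) = bEdge B ε i - m ε) :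
    gB Λ B τ v = MvPolynomial.C (tmon Λ (-∑ ε ∈ τ, m ε • v ε)) *
      ∑ i : Fin n, MvPolynomial.X i.succ * MvPolynomial.C (tmon Λ (Bᵀ i)) := by
  rw [gB, Finset.mul_sum]
  refine Finset.sum_congr rfl fun i _ => ?_
  rw [prod_tmon_pow_bplus B Λ τ v m hτ hv hm, sub_eq_add_neg, tmon_add, MvPolynomial.C_mul]
  ring

end gB

/-- for two `d`-dimensional nonsingular cones `σ, σ'` (with dual bases
`u, u'`), the polynomials `g_B(σ)` and `g_B(σ')` differ by a unit monomial in the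
variables `t₁, …, t_d`:  `g_B(σ') = (∏_l t_l^{c_l}) ⬝ g_B(σ)` for some `c ∈ ℤ^d`. -/
theorem stmt8 (Λ : Type) [CommRing Λ] (d n : ℕ) (B : Matrix (Fin d) (Fin n) ℤ)
    (σ σ' : Finset (Fin d → ℤ)) (hσ : IsNsCone d σ) (hσ' : IsNsCone d σ')
    (u u' : (Fin d → ℤ) → Fin d → ℤ)
    (hu : ∀ ε ∈ σ, ∀ ε' ∈ σ, (∑ l, ε' l * u ε l) = if ε' = ε then 1 else 0)
    (hu' : ∀ ε ∈ σ', ∀ ε' ∈ σ', (∑ l, ε' l * u' ε l) = if ε' = ε then 1 else 0) :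
    ∃ c : Fin d → ℤ,
      gB Λ B σ' u' = MvPolynomial.C (tmon Λ c) * gB Λ B σ u := by
  choose m hm using exists_bplus_eq_sub B
  refine ⟨∑ ε ∈ σ, m ε • u ε - ∑ ε ∈ σ', m ε • u' ε, ?_⟩
  rw [gB_eq_C_tmon_mul B Λ σ' u' m hσ'.2 hu' hm, gB_eq_C_tmon_mul B Λ σ u m hσ.2 hu hm,
    ← mul_assoc, ← MvPolynomial.C_mul, ← tmon_add]
  congr 3
  abel
end

section
/- Let p be a prime, and let A be a (d+1)×(d+1) integer matrix of rank d+1 over ℚ which is not p-nondegenerate. Set F = diag(p,1,…,1) ∈ Mat(d+1, ℤ). Then there exist r ≥ 1 and P₁,…,P_r ∈ GL(d+1, ℤ) such that the rational matrix F⁻¹P_r ⋯ F⁻¹P₁A has integer entries and is p-nondegenerate. -/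
open Finset

/-- `A` is `p`-nondegenerate: for every subset `θ` of the column indices, the rank over
`ℚ` of the submatrix `A[θ]` equals the rank over `𝔽_p` of its reduction modulo `p`. -/
def PNondeg (p : ℕ) {d n : ℕ} (A : Matrix (Fin (d + 1)) (Fin n) ℤ) : Prop :=
  ∀ θ : Finset (Fin n),
    ((A.submatrix id (fun j : θ => (j : Fin n))).map (Int.cast : ℤ → ℚ)).rank =
      ((A.submatrix id (fun j : θ => (j : Fin n))).map (Int.cast : ℤ → ZMod p)).rank

/-- The matrix `F = diag(p, 1, …, 1) ∈ Mat(d+1, ℤ)`. -/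
def Fmat (p d : ℕ) : Matrix (Fin (d + 1)) (Fin (d + 1)) ℤ :=
  Matrix.diagonal (fun i => if i = 0 then (p : ℤ) else 1)

/-- The rational matrix `F⁻¹ P_r ⋯ F⁻¹ P_1 A`, with `P i = P_{i+1}`. -/
noncomputable def tower (p d : ℕ) (A : Matrix (Fin (d + 1)) (Fin (d + 1)) ℤ) :
    (r : ℕ) → (Fin r → Matrix (Fin (d + 1)) (Fin (d + 1)) ℤ) →
      Matrix (Fin (d + 1)) (Fin (d + 1)) ℚ
  | 0, _ => A.map (Int.cast : ℤ → ℚ)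
  | r + 1, P =>
      ((Fmat p d).map (Int.cast : ℤ → ℚ))⁻¹ *
        ((P (Fin.last r)).map (Int.cast : ℤ → ℚ)) *
        tower p d A r (fun i => P i.castSucc)

open Matrix

/-- The rank of a column-submatrix of an invertible matrix over a field is the number
of selected columns. -/
lemma rank_submatrix_of_isUnit {K : Type*} [Field K] {m : ℕ}
    (M : Matrix (Fin m) (Fin m) K) (hM : IsUnit M.det) (θ : Finset (Fin m)) :
    (M.submatrix id (fun j : θ => (j : Fin m))).rank = θ.card := by
  classical
  set f : θ → Fin m := fun j => (j : Fin m) with hf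
  have hfi : Function.Injective f := fun a b h => Subtype.ext h
  set J := (1 : Matrix (Fin m) (Fin m) K).submatrix (⇑(Equiv.refl (Fin m))) f with hJ
  have h1 : M.submatrix id f = M * J := by
    rw [hJ, Matrix.mul_submatrix_one]
    rfl
  have h2 : (M.submatrix id f).rank = J.rank := by
    rw [h1]
    exact Matrix.rank_mul_eq_right_of_isUnit_det M J hM
  have hle : J.rank ≤ θ.card := by
    have := Matrix.rank_le_card_width J
    simpa [Fintype.card_coe] using this
  set C := (1 : Matrix (Fin m) (Fin m) K).submatrix f id with hC
  have hCJ : C * J = (1 : Matrix θ θ K) := by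
    ext i j
    simp only [Matrix.mul_apply, hC, hJ, Matrix.submatrix_apply, Matrix.one_apply,
      Equiv.refl_apply, id_eq]
    by_cases hij : i = j
    · subst hij
      simp
    · have hfij : f i ≠ f j := fun hc => hij (hfi hc)
      simp [hij, hfij, ite_and]
  have hge : θ.card ≤ J.rank := by
    have h4 := Matrix.rank_mul_le_right C J
    rw [hCJ] at h4
    simpa [Matrix.rank_one, Fintype.card_coe] using h4
  rw [h2]
  omega

/-- An integer square matrix whose determinant is not divisible by `p` is
`p`-nondegenerate. -/
lemma pnondeg_of_not_dvd {p d : ℕ} (hp : p.Prime)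
    (A : Matrix (Fin (d + 1)) (Fin (d + 1)) ℤ) (h : ¬ (p : ℤ) ∣ A.det) :
    PNondeg p A := by
  haveI : Fact p.Prime := ⟨hp⟩
  have hd0 : A.det ≠ 0 := fun h0 => h (h0 ▸ dvd_zero _)
  have hdQ : IsUnit ((A.map (Int.cast : ℤ → ℚ)).det) := by
    rw [show A.map (Int.cast : ℤ → ℚ) = (Int.castRingHom ℚ).mapMatrix A from rfl,
      ← RingHom.map_det, eq_intCast]
    simp only [isUnit_iff_ne_zero, ne_eq, Int.cast_eq_zero]
    exact hd0
  have hdP : IsUnit ((A.map (Int.cast : ℤ → ZMod p)).det) := by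
    rw [show A.map (Int.cast : ℤ → ZMod p) = (Int.castRingHom (ZMod p)).mapMatrix A from rfl,
      ← RingHom.map_det, eq_intCast]
    rw [isUnit_iff_ne_zero, Ne, ZMod.intCast_zmod_eq_zero_iff_dvd]
    exact h
  intro θ
  rw [← Matrix.submatrix_map, ← Matrix.submatrix_map,
    rank_submatrix_of_isUnit _ hdQ θ, rank_submatrix_of_isUnit _ hdP θ]

/-- One division step: if `p ∣ det A` then there is a unimodular `P` and an integer
matrix `A₁` with `F * A₁ = P * A`. -/
lemma step_lemma {p d : ℕ} (hp : p.Prime)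
    (A : Matrix (Fin (d + 1)) (Fin (d + 1)) ℤ) (hdvd : (p : ℤ) ∣ A.det) :
    ∃ P A₁ : Matrix (Fin (d + 1)) (Fin (d + 1)) ℤ,
      IsUnit P.det ∧ Fmat p d * A₁ = P * A ∧ (p : ℤ) * A₁.det = P.det * A.det := by
  classical
  haveI : Fact p.Prime := ⟨hp⟩
  set Abar := A.map (Int.cast : ℤ → ZMod p) with hAbar
  have hdet0 : Abar.det = 0 := by
    rw [show Abar = (Int.castRingHom (ZMod p)).mapMatrix A from rfl, ← RingHom.map_det,
      eq_intCast, ZMod.intCast_zmod_eq_zero_iff_dvd]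
    exact hdvd
  obtain ⟨g0, hg0ne, hg0⟩ := Matrix.exists_vecMul_eq_zero_iff.mpr hdet0
  obtain ⟨i₀, hi₀⟩ := Function.ne_iff.mp hg0ne
  simp only [Pi.zero_apply] at hi₀
  obtain ⟨g, hg, hgi₀⟩ : ∃ g : Fin (d + 1) → ZMod p, Matrix.vecMul g Abar = 0 ∧ g i₀ = 1 :=
    ⟨(g0 i₀)⁻¹ • g0, by rw [Matrix.smul_vecMul, hg0, smul_zero], by
      simp [inv_mul_cancel₀ hi₀]⟩
  obtain ⟨w, hw, hwi₀⟩ : ∃ w : Fin (d + 1) → ℤ,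
      (∀ k, ((w k : ℤ) : ZMod p) = g k) ∧ w i₀ = 1 := by
    haveI : Fact (1 < p) := ⟨hp.one_lt⟩
    refine ⟨fun k => ((g k).val : ℤ), fun k => ?_, ?_⟩
    · simp [ZMod.natCast_val, ZMod.cast_id]
    · simp [hgi₀, ZMod.val_one p]
  set Q : Matrix (Fin (d + 1)) (Fin (d + 1)) ℤ :=
    Matrix.of (fun i j => if j = i₀ then w i else (1 : Matrix (Fin (d + 1)) (Fin (d + 1)) ℤ) i j)
    with hQdef
  have hQdet : Q.det = 1 := by
    have hdQ := Matrix.det_eq_of_forall_row_eq_smul_add_const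
      (A := Q) (B := (1 : Matrix (Fin (d + 1)) (Fin (d + 1)) ℤ))
      (fun i => w i - (1 : Matrix (Fin (d + 1)) (Fin (d + 1)) ℤ) i i₀) i₀
      (by simp [hwi₀])
      (fun i j => by
        by_cases hji : j = i₀
        · subst hji
          simp [hQdef]
        · simp [hQdef, hji, Matrix.one_apply_ne' hji])
    rw [hdQ, Matrix.det_one]
  set σ : Equiv.Perm (Fin (d + 1)) := Equiv.swap 0 i₀ with hσdef
  set P : Matrix (Fin (d + 1)) (Fin (d + 1)) ℤ := Qᵀ.submatrix σ id with hPdef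
  have hPunit : IsUnit P.det := by
    rw [hPdef, Matrix.det_permute, Matrix.det_transpose, hQdet, mul_one]
    exact Units.isUnit _
  have hProw : ∀ k, P 0 k = w k := by
    intro k
    simp [hPdef, hσdef, Equiv.swap_apply_left, hQdef]
  have hdiv : ∀ j, (p : ℤ) ∣ (P * A) 0 j := by
    intro j
    rw [← ZMod.intCast_zmod_eq_zero_iff_dvd]
    have hcast : (((P * A) 0 j : ℤ) : ZMod p) = (g ᵥ* Abar) j := by
      rw [Matrix.mul_apply]
      push_cast
      simp [Matrix.vecMul, dotProduct, hProw, hw, hAbar, Matrix.map_apply]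
    rw [hcast, hg, Pi.zero_apply]
  set A₁ : Matrix (Fin (d + 1)) (Fin (d + 1)) ℤ :=
    Matrix.of (fun i j => if i = 0 then (P * A) 0 j / p else (P * A) i j) with hA₁def
  have hFA : Fmat p d * A₁ = P * A := by
    ext i j
    rw [Fmat, Matrix.diagonal_mul]
    by_cases hi : i = 0
    · subst hi
      simp only [if_pos rfl, hA₁def, Matrix.of_apply]
      exact Int.mul_ediv_cancel' (hdiv j)
    · simp [hA₁def, hi]
  have hdetF : (Fmat p d).det = (p : ℤ) := by
    rw [Fmat, Matrix.det_diagonal]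
    simp
  have hdet : (p : ℤ) * A₁.det = P.det * A.det := by
    have hcd := congrArg Matrix.det hFA
    rwa [Matrix.det_mul, Matrix.det_mul, hdetF] at hcd
  exact ⟨P, A₁, hPunit, hFA, hdet⟩

lemma tower_cons {p d : ℕ} (hp : 0 < p) {A A₁ P : Matrix (Fin (d + 1)) (Fin (d + 1)) ℤ}
    (h : Fmat p d * A₁ = P * A) :
    ∀ (r : ℕ) (P' : Fin r → Matrix (Fin (d + 1)) (Fin (d + 1)) ℤ),
      tower p d A (r + 1) (Fin.cons P P') = tower p d A₁ r P' := by
  have hFdet : IsUnit ((Fmat p d).map (Int.cast : ℤ → ℚ)).det := by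
    rw [show (Fmat p d).map (Int.cast : ℤ → ℚ) = (Int.castRingHom ℚ).mapMatrix (Fmat p d)
      from rfl, ← RingHom.map_det, eq_intCast, Fmat, Matrix.det_diagonal]
    simp [isUnit_iff_ne_zero, hp.ne']
  have hmap : ((Fmat p d).map (Int.cast : ℤ → ℚ)) * (A₁.map (Int.cast : ℤ → ℚ))
      = (P.map (Int.cast : ℤ → ℚ)) * (A.map (Int.cast : ℤ → ℚ)) := by
    have hc : (Int.castRingHom ℚ).mapMatrix (Fmat p d * A₁)
        = (Int.castRingHom ℚ).mapMatrix (P * A) := by rw [h]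
    rw [_root_.map_mul, _root_.map_mul] at hc
    exact hc
  have hbase : ((Fmat p d).map (Int.cast : ℤ → ℚ))⁻¹ * (P.map (Int.cast : ℤ → ℚ)) *
      (A.map (Int.cast : ℤ → ℚ)) = A₁.map (Int.cast : ℤ → ℚ) := by
    haveI := ((Fmat p d).map (Int.cast : ℤ → ℚ)).invertibleOfIsUnitDet hFdet
    rw [mul_assoc, ← hmap, Matrix.inv_mul_cancel_left_of_invertible]
  intro r
  induction r with
  | zero =>
    intro P'
    have h0 : (Fin.cons P P' : Fin 1 → Matrix (Fin (d + 1)) (Fin (d + 1)) ℤ)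
        (Fin.last 0) = P := by
      rw [show Fin.last 0 = 0 from rfl, Fin.cons_zero]
    simp only [tower, h0]
    exact hbase
  | succ r ih =>
    intro P'
    have h1 : (fun i : Fin (r + 1) =>
          (Fin.cons P P' : Fin (r + 2) → Matrix (Fin (d + 1)) (Fin (d + 1)) ℤ) i.castSucc)
        = (Fin.cons P (fun i : Fin r => P' i.castSucc) :
            Fin (r + 1) → Matrix (Fin (d + 1)) (Fin (d + 1)) ℤ) := by
      funext i
      rcases Fin.eq_zero_or_eq_succ i with hi | ⟨j, hj⟩
      · subst hi
        simp
      · subst hj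
        rw [← Fin.succ_castSucc, Fin.cons_succ, Fin.cons_succ]
    have h2 : (Fin.cons P P' : Fin (r + 2) → Matrix (Fin (d + 1)) (Fin (d + 1)) ℤ)
        (Fin.last (r + 1)) = P' (Fin.last r) := by
      rw [← Fin.succ_last, Fin.cons_succ]
    calc tower p d A (r + 1 + 1) (Fin.cons P P')
        = ((Fmat p d).map (Int.cast : ℤ → ℚ))⁻¹ *
            (((Fin.cons P P' : Fin (r + 2) → Matrix (Fin (d + 1)) (Fin (d + 1)) ℤ)
              (Fin.last (r + 1))).map (Int.cast : ℤ → ℚ)) *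
            tower p d A (r + 1) (fun i =>
              (Fin.cons P P' : Fin (r + 2) → Matrix (Fin (d + 1)) (Fin (d + 1)) ℤ)
                i.castSucc) := rfl
      _ = ((Fmat p d).map (Int.cast : ℤ → ℚ))⁻¹ *
            ((P' (Fin.last r)).map (Int.cast : ℤ → ℚ)) *
            tower p d A₁ r (fun i => P' i.castSucc) := by rw [h2, h1, ih]
      _ = tower p d A₁ (r + 1) P' := rfl

lemma key_lemma {p d : ℕ} (hp : p.Prime) :
    ∀ (N : ℕ) (A : Matrix (Fin (d + 1)) (Fin (d + 1)) ℤ), A.det.natAbs ≤ N → A.det ≠ 0 →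
    ∃ (r : ℕ) (P : Fin r → Matrix (Fin (d + 1)) (Fin (d + 1)) ℤ),
      (∀ i, IsUnit (P i).det) ∧
      ∃ A' : Matrix (Fin (d + 1)) (Fin (d + 1)) ℤ,
        A'.map (Int.cast : ℤ → ℚ) = tower p d A r P ∧ ¬ (p : ℤ) ∣ A'.det := by
  intro N
  induction N with
  | zero =>
    intro A hle hne
    exact absurd (Int.natAbs_eq_zero.mp (Nat.le_zero.mp hle)) hne
  | succ N ih =>
    intro A hle hne
    by_cases hdvd : (p : ℤ) ∣ A.det
    · obtain ⟨P, A₁, hPu, hFA, hdet⟩ := step_lemma hp A hdvd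
      have hPne : P.det ≠ 0 := hPu.ne_zero
      have hA₁ne : A₁.det ≠ 0 := by
        intro h0
        rw [h0, mul_zero] at hdet
        exact hne (by
          rcases mul_eq_zero.mp hdet.symm with h | h
          · exact absurd h hPne
          · exact h)
      have hna : A₁.det.natAbs ≤ N := by
        have h1 : (p : ℤ).natAbs * A₁.det.natAbs = P.det.natAbs * A.det.natAbs := by
          rw [← Int.natAbs_mul, ← Int.natAbs_mul, hdet]
        have h2 : P.det.natAbs = 1 := Int.isUnit_iff_natAbs_eq.mp hPu
        have hp2 := hp.two_le
        have h3 : A₁.det.natAbs ≠ 0 := Int.natAbs_ne_zero.mpr hA₁ne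
        rw [Int.natAbs_natCast, h2, one_mul] at h1
        have h4 : 1 ≤ A₁.det.natAbs := Nat.pos_of_ne_zero h3
        have h5 : 2 * A₁.det.natAbs ≤ p * A₁.det.natAbs :=
          Nat.mul_le_mul_right _ hp2
        omega
      obtain ⟨r, P', hP'u, A'', hmap, hnd⟩ := ih A₁ hna hA₁ne
      refine ⟨r + 1, Fin.cons P P', ?_, A'', ?_, hnd⟩
      · intro i
        refine Fin.cases ?_ (fun j => ?_) i
        · simpa using hPu
        · simpa using hP'u j
      · rw [tower_cons hp.pos hFA r P', hmap]
    · exact ⟨0, fun i => i.elim0, fun i => i.elim0, A, rfl, hdvd⟩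

/-- if the square integer matrix `A`, of full rank `d + 1` over `ℚ`, is not
`p`-nondegenerate, then there are `r ≥ 1` and `P₁, …, P_r ∈ GL(d+1, ℤ)` such that the
rational matrix `F⁻¹ P_r ⋯ F⁻¹ P₁ A` has integer entries and is `p`-nondegenerate. -/
theorem stmt14 (p : ℕ) (hp : p.Prime) (d : ℕ)
    (A : Matrix (Fin (d + 1)) (Fin (d + 1)) ℤ)
    (hrank : (A.map (Int.cast : ℤ → ℚ)).rank = d + 1)
    (hdeg : ¬ PNondeg p A) :
    ∃ r : ℕ, 1 ≤ r ∧ ∃ P : Fin r → Matrix (Fin (d + 1)) (Fin (d + 1)) ℤ,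
      (∀ i, IsUnit (P i).det) ∧
      ∃ A' : Matrix (Fin (d + 1)) (Fin (d + 1)) ℤ,
        A'.map (Int.cast : ℤ → ℚ) = tower p d A r P ∧ PNondeg p A' := by
  have hdetne : A.det ≠ 0 := by
    have hr : LinearMap.range (A.map (Int.cast : ℤ → ℚ)).mulVecLin = ⊤ := by
      apply Submodule.eq_top_of_finrank_eq
      have hd : (A.map (Int.cast : ℤ → ℚ)).rank
          = Module.finrank ℚ (LinearMap.range (A.map (Int.cast : ℤ → ℚ)).mulVecLin) := rfl
      rw [← hd, hrank]
      simp [Module.finrank_pi]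
    have hsurj : Function.Surjective ((A.map (Int.cast : ℤ → ℚ)).mulVec) := by
      intro v
      obtain ⟨w, hw⟩ := LinearMap.range_eq_top.mp hr v
      exact ⟨w, hw⟩
    have hU := (Matrix.isUnit_iff_isUnit_det _).mp (Matrix.mulVec_surjective_iff_isUnit.mp hsurj)
    rw [show A.map (Int.cast : ℤ → ℚ) = (Int.castRingHom ℚ).mapMatrix A from rfl,
      ← RingHom.map_det, eq_intCast] at hU
    simp only [isUnit_iff_ne_zero, ne_eq, Int.cast_eq_zero] at hU
    exact hU
  have hdvd : (p : ℤ) ∣ A.det := by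
    by_contra h
    exact hdeg (pnondeg_of_not_dvd hp A h)
  obtain ⟨P, A₁, hPu, hFA, hdet⟩ := step_lemma hp A hdvd
  have hA₁ne : A₁.det ≠ 0 := by
    intro h0
    rw [h0, mul_zero] at hdet
    rcases mul_eq_zero.mp hdet.symm with h | h
    · exact hPu.ne_zero h
    · exact hdetne h
  obtain ⟨r, P', hP'u, A'', hmap, hnd⟩ := key_lemma hp A₁.det.natAbs A₁ le_rfl hA₁ne
  refine ⟨r + 1, Nat.succ_le_succ (Nat.zero_le r), Fin.cons P P', ?_, A'',
    ?_, pnondeg_of_not_dvd hp A'' hnd⟩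
  · intro i
    refine Fin.cases ?_ (fun j => ?_) i
    · simpa using hPu
    · simpa using hP'u j
  · rw [tower_cons hp.pos hFA r P', hmap]
end
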